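/- arXiv:2105.03081 — 8 statements merged into one kernel-verified Lean document; each statement's English description precedes it below -/
import Mathlib

section
/- For every s ∈ S: μ_s(Safe) = 1 if and only if there is no finite sequence s_0 = s, s_1, …, s_m in S with s_{i+1} ∈ support(P s_i) for every i < m and s_m ∈ Acc. -/
open MeasureTheory Set
open scoped ENNReal Classical

variable {S : Type*}

def IsPathMeasure [MeasurableSpace S] (P : S → PMF S) (μ : S → Measure (ℕ → S)) : Prop :=
  (∀ s, IsProbabilityMeasure (μ s)) ∧
    ∀ (s : S) (n : ℕ) (x : ℕ → S),
      μ s {ω | ∀ i ≤ n, ω i = x i} =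
        (if x 0 = s then 1 else 0) * ∏ i ∈ Finset.range n, (P (x i)) (x (i + 1))

noncomputable def Rw (Acc : Set S) (γacc rn : ℝ) (s : S) : ℝ :=
  if s ∈ Acc then (1 - γacc) * rn else 0

noncomputable def Γw (Acc : Set S) (γacc γ : ℝ) (s : S) : ℝ :=
  if s ∈ Acc then γacc else γ

noncomputable def Ret (Acc : Set S) (γacc γ rn : ℝ) (ω : ℕ → S) : ℝ :=
  ∑' t : ℕ, Rw Acc γacc rn (ω (t + 1)) * ∏ k ∈ Finset.range t, Γw Acc γacc γ (ω (k + 1))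

noncomputable def Val [MeasurableSpace S] (Acc : Set S) (γacc γ rn : ℝ)
    (μ : S → Measure (ℕ → S)) (s : S) : ℝ :=
  ∫ ω, Ret Acc γacc γ rn ω ∂ (μ s)

/-!
A cylinder `{ω | ∀ i ≤ n, ω i = x i}` has positive probability exactly when `x` follows support
transitions from `s` up to time `n`. Since there are only countably many cylinders of each length,
almost every path lies only in cylinders of positive probability, so almost surely every prefix of
the path is a support path from `s`. Hence a support path from `s` into `Acc` yields a
positive-probability cylinder of unsafe paths, and without one almost every path stays safe.
-/

theorem ae_measure_preimage_singleton_ne_zero {α β : Type*} [MeasurableSpace α] [Countable β]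
    (μ : Measure α) (f : α → β) : ∀ᵐ a ∂μ, μ (f ⁻¹' {f a}) ≠ 0 := by
  have hnull : μ (f ⁻¹' {b | μ (f ⁻¹' {b}) = 0}) = 0 :=
    (measure_preimage_eq_zero_iff_of_countable (Set.to_countable _)).mpr fun _ hb => hb
  simpa [ae_iff] using hnull

theorem ae_measure_cylinder_ne_zero [MeasurableSpace S] [Countable S]
    (μ : Measure (ℕ → S)) (n : ℕ) : ∀ᵐ ω ∂μ, μ {ω' | ∀ i ≤ n, ω' i = ω i} ≠ 0 := by
  have hcyl (ω : ℕ → S) : {ω' : ℕ → S | ∀ i ≤ n, ω' i = ω i} =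
      (fun ω' (i : Fin (n + 1)) => ω' i) ⁻¹' {fun i : Fin (n + 1) => ω i} := by
    ext ω'
    simp only [mem_ofPred_eq, mem_preimage, mem_singleton_iff, funext_iff, Fin.forall_iff,
      Nat.lt_succ_iff]
  simpa only [hcyl] using ae_measure_preimage_singleton_ne_zero μ fun ω' (i : Fin (n + 1)) => ω' i

theorem IsPathMeasure.measure_cylinder_ne_zero_iff [MeasurableSpace S] {P : S → PMF S}
    {μ : S → Measure (ℕ → S)} (hμ : IsPathMeasure P μ) (s : S) (n : ℕ) (x : ℕ → S) :
    μ s {ω | ∀ i ≤ n, ω i = x i} ≠ 0 ↔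
      x 0 = s ∧ ∀ i < n, x (i + 1) ∈ (P (x i)).support := by
  simp [hμ.2, Finset.prod_ne_zero_iff, PMF.mem_support_iff]

theorem safe_ae_iff_no_reaching_path_general
    [Fintype S] [MeasurableSpace S] [MeasurableSingletonClass S]
    (P : S → PMF S) (Acc : Set S) (μ : S → Measure (ℕ → S))
    (hμ : IsPathMeasure P μ) (s : S) :
    μ s {ω | ∀ t, ω t ∉ Acc} = 1 ↔
      ¬ ∃ (m : ℕ) (x : ℕ → S), x 0 = s ∧
        (∀ i < m, x (i + 1) ∈ (P (x i)).support) ∧ x m ∈ Acc := by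
  have := hμ.1 s
  have hsafe : MeasurableSet {ω : ℕ → S | ∀ t, ω t ∉ Acc} := by
    simp only [ofPred_forall]
    exact .iInter fun t => Acc.toFinite.measurableSet.compl.preimage (measurable_pi_apply t)
  rw [← mem_ae_iff_prob_eq_one hsafe]
  constructor
  · rintro hae ⟨m, x, hx0, hpath, hacc⟩
    refine (hμ.measure_cylinder_ne_zero_iff s m x).mpr ⟨hx0, hpath⟩ (measure_mono_null ?_ hae)
    exact fun ω hω hω_safe => hω_safe m (hω m le_rfl ▸ hacc)
  · intro hno
    filter_upwards [ae_all_iff.mpr (ae_measure_cylinder_ne_zero (μ s))] with ω hω t hacc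
    obtain ⟨hω0, hpath⟩ := (hμ.measure_cylinder_ne_zero_iff s t ω).mp (hω t)
    exact hno ⟨t, ω, hω0, hpath, hacc⟩

/-- the safety event has probability one from `s` iff no finite sequence of
support-transitions starting at `s` reaches `Acc`. -/
theorem safe_ae_iff_no_reaching_path
    [Fintype S] [Nonempty S] [MeasurableSpace S] [MeasurableSingletonClass S]
    (P : S → PMF S) (Acc : Set S) (μ : S → Measure (ℕ → S))
    (hμ : IsPathMeasure P μ) (s : S) :
    μ s {ω | ∀ t, ω t ∉ Acc} = 1 ↔
      ¬ ∃ (m : ℕ) (x : ℕ → S), x 0 = s ∧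
        (∀ i < m, x (i + 1) ∈ (P (x i)).support) ∧ x m ∈ Acc :=
  safe_ae_iff_no_reaching_path_general P Acc μ hμ s
end

section
/- Let P, P' : S → PMF S be two transition functions with support(P' s) ⊆ support(P s) for every s ∈ S, and let μ_s and μ'_s be the corresponding path measures started at s. Then for every s ∈ S, μ_s(Safe) = 1 implies μ'_s(Safe) = 1. -/
open MeasureTheory Set
open scoped ENNReal Classical

variable {S : Type*}

/-! A path of the chain `P'` can only charge a cylinder if each of its transitions has positive
`P'`-probability, hence positive `P`-probability, so every `μ s`-null cylinder is `μ' s`-null.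
As `S` is countable, the law of each finite prefix of the path under `μ' s` is then absolutely
continuous with respect to its law under `μ s`, and the unsafe event is a countable union of
events each determined by a finite prefix. -/

open Preorder

lemma IsPathMeasure.cylinder_null_of_support_subset [MeasurableSpace S]
    {P P' : S → PMF S} (hsupp : ∀ s, (P' s).support ⊆ (P s).support)
    {μ μ' : S → Measure (ℕ → S)} (hμ : IsPathMeasure P μ) (hμ' : IsPathMeasure P' μ')
    (s : S) (n : ℕ) (x : ℕ → S) (hnull : μ s {ω | ∀ i ≤ n, ω i = x i} = 0) :
    μ' s {ω | ∀ i ≤ n, ω i = x i} = 0 := by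
  rw [hμ.2] at hnull
  rw [hμ'.2]
  rcases mul_eq_zero.1 hnull with hstart | hstep
  · rw [hstart, zero_mul]
  · obtain ⟨i, hi, hPi⟩ := Finset.prod_eq_zero_iff.1 hstep
    have hP'i : P' (x i) (x (i + 1)) = 0 :=
      (PMF.apply_eq_zero_iff _ _).2 fun hmem => hsupp (x i) hmem hPi
    rw [Finset.prod_eq_zero hi hP'i, mul_zero]

lemma frestrictLe_preimage_singleton (n : ℕ) (x : ℕ → S) :
    frestrictLe n ⁻¹' ({frestrictLe n x} : Set (Finset.Iic n → S)) =
      {ω | ∀ i ≤ n, ω i = x i} := by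
  ext ω
  simp [funext_iff, frestrictLe]

section CylinderNull

variable [MeasurableSpace S] [Countable S] [MeasurableSingletonClass S]
  {μ ν : Measure (ℕ → S)}

lemma map_frestrictLe_absolutelyContinuous_of_cylinder_null
    (h : ∀ n (x : ℕ → S), μ {ω | ∀ i ≤ n, ω i = x i} = 0 → ν {ω | ∀ i ≤ n, ω i = x i} = 0)
    (n : ℕ) :
    ν.map (frestrictLe n) ≪ μ.map (frestrictLe n) := by
  intro A hA
  rw [measure_null_iff_singleton A.to_countable] at hA ⊢
  intro y hy
  have hfibre (ρ : Measure (ℕ → S)) :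
      ρ.map (frestrictLe n) {y} = ρ (frestrictLe n ⁻¹' {y}) :=
    Measure.map_apply (measurable_frestrictLe n) (measurableSet_singleton y)
  have hμy := hA y hy
  rw [hfibre] at hμy ⊢
  by_cases hy' : y ∈ range (frestrictLe n : (ℕ → S) → _)
  · obtain ⟨x, rfl⟩ := hy'
    rw [frestrictLe_preimage_singleton] at hμy ⊢
    exact h n x hμy
  · rw [preimage_singleton_eq_empty.2 hy', measure_empty]

lemma coord_mem_null_of_cylinder_null
    (h : ∀ n (x : ℕ → S), μ {ω | ∀ i ≤ n, ω i = x i} = 0 → ν {ω | ∀ i ≤ n, ω i = x i} = 0)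
    {A : Set S} (hA : MeasurableSet A) (t : ℕ) (hnull : μ {ω | ω t ∈ A} = 0) :
    ν {ω | ω t ∈ A} = 0 := by
  let B : Set (Finset.Iic t → S) := {y | y ⟨t, Finset.mem_Iic.2 le_rfl⟩ ∈ A}
  have hmap (ρ : Measure (ℕ → S)) : ρ.map (frestrictLe t) B = ρ {ω | ω t ∈ A} :=
    Measure.map_apply (measurable_frestrictLe t) (measurable_pi_apply _ hA)
  rw [← hmap] at hnull ⊢
  exact map_frestrictLe_absolutelyContinuous_of_cylinder_null h t hnull

end CylinderNull

theorem safe_ae_of_support_subset_general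
    [Fintype S] [MeasurableSpace S] [MeasurableSingletonClass S]
    (P P' : S → PMF S) (hsupp : ∀ s, (P' s).support ⊆ (P s).support)
    (Acc : Set S) (μ μ' : S → Measure (ℕ → S))
    (hμ : IsPathMeasure P μ) (hμ' : IsPathMeasure P' μ') (s : S)
    (hs : μ s {ω | ∀ t, ω t ∉ Acc} = 1) :
    μ' s {ω | ∀ t, ω t ∉ Acc} = 1 := by
  have hAcc : MeasurableSet Acc := Acc.toFinite.measurableSet
  have hsafe : MeasurableSet {ω : ℕ → S | ∀ t, ω t ∉ Acc} := by
    rw [ofPred_forall]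
    exact .iInter fun t => hAcc.compl.preimage (measurable_pi_apply t)
  have := hμ.1 s
  have := hμ'.1 s
  rw [← prob_compl_eq_zero_iff hsafe] at hs ⊢
  simp only [compl_ofPred, not_forall, not_not, ofPred_exists, measure_iUnion_null_iff] at hs ⊢
  exact fun t => coord_mem_null_of_cylinder_null
    (hμ.cylinder_null_of_support_subset hsupp hμ' s) hAcc t (hs t)

/-- almost-sure safety depends only on the supports of the transition
kernel: shrinking supports preserves almost-sure safety. -/
theorem safe_ae_of_support_subset
    [Fintype S] [Nonempty S] [MeasurableSpace S] [MeasurableSingletonClass S]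
    (P P' : S → PMF S) (hsupp : ∀ s, (P' s).support ⊆ (P s).support)
    (Acc : Set S) (μ μ' : S → Measure (ℕ → S))
    (hμ : IsPathMeasure P μ) (hμ' : IsPathMeasure P' μ') (s : S)
    (hs : μ s {ω | ∀ t, ω t ∉ Acc} = 1) :
    μ' s {ω | ∀ t, ω t ∉ Acc} = 1 :=
  safe_ae_of_support_subset_general P P' hsupp Acc μ μ' hμ hμ' s hs
end

section
/- For every s ∈ S, the hitting time N of Acc satisfies ∫_{{ω : N(ω) < ∞}} N(ω) dμ_s(ω) < ∞; consequently the conditional expectation of N given that the path visits Acc is finite (whenever μ_s({N < ∞}) > 0), and its maximum over the finitely many states s with μ_s({N < ∞}) > 0 is finite. -/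
/-!
Call a state *reaching* if it lies outside `Acc` and `Acc` can be reached from it along
transitions of positive probability. Almost every path only makes transitions of positive
probability, so a path that hits `Acc` at time `N` has `ω 0, …, ω n` reaching for every `n < N`:
`N` is dominated by `∑ₙ 1{ω 0, …, ω n reaching}`. By the Markov property the probability
`gₙ(t)` of staying reaching for the first `n + 1` steps from `t` satisfies
`g_{m+n}(t) ≤ (max_{u reaching} gₙ(u)) · gₘ(t)`, and from every reaching state the chain leaves
the reaching states with positive probability within finitely many steps. As there are finitely
many states, `max_u gₘ(u) < 1` for some `m`, so `gₙ(s)` decays geometrically and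
`∑ₙ gₙ(s) < ∞`.
-/

open MeasureTheory Set
open scoped ENNReal Classical

variable {S : Type*}

noncomputable def hitTime (Acc : Set S) (ω : ℕ → S) : ℝ≥0∞ :=
  ⨅ (t : ℕ) (_ : ω t ∈ Acc), (t : ℝ≥0∞)


lemma PMF.sum_mul_lt_one [Fintype S] (p : PMF S) {f : S → ℝ≥0∞} (hf : ∀ w, f w ≤ 1) {v : S}
    (hv : p v ≠ 0) (hfv : f v < 1) : ∑ w, p w * f w < 1 :=
  calc ∑ w, p w * f w = p v * f v + ∑ w ∈ Finset.univ.erase v, p w * f w :=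
        (Finset.add_sum_erase _ _ (Finset.mem_univ v)).symm
    _ < p v * 1 + ∑ w ∈ Finset.univ.erase v, p w * 1 :=
        ENNReal.add_lt_add_of_lt_of_le
          (ENNReal.sum_ne_top.2 fun w _ =>
            ENNReal.mul_ne_top (p.apply_ne_top w) ((hf w).trans_lt ENNReal.one_lt_top).ne)
          (ENNReal.mul_lt_mul_right hv (p.apply_ne_top v) hfv)
          (Finset.sum_le_sum fun w _ => mul_le_mul_right (hf w) _)
    _ = 1 := by
        simp_rw [mul_one]
        rw [Finset.add_sum_erase _ _ (Finset.mem_univ v),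
          ← tsum_fintype (L := SummationFilter.unconditional S), p.tsum_coe]

lemma ENNReal.tsum_pow_div (c : ℝ≥0∞) (m : ℕ) [NeZero m] :
    ∑' n, c ^ (n / m) = m * (1 - c)⁻¹ := by
  have hdiv (a : ℕ) (b : Fin m) : (a * m + b) / m = a := by
    rw [mul_comm, Nat.mul_add_div (NeZero.pos m), Nat.div_eq_of_lt b.isLt, add_zero]
  rw [← (Nat.divModEquiv m).symm.tsum_eq, ENNReal.tsum_prod', ENNReal.tsum_comm]
  simp [hdiv, ENNReal.tsum_geometric]

section HitTime

variable {Acc : Set S} {ω : ℕ → S}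

lemma hitTime_eq_find (h : ∃ t, ω t ∈ Acc) : hitTime Acc ω = Nat.find h :=
  le_antisymm (iInf₂_le (f := fun t (_ : ω t ∈ Acc) => (t : ℝ≥0∞)) _ (Nat.find_spec h))
    (le_iInf₂ fun _ ht => Nat.cast_le.2 (Nat.find_min' h ht))

lemma exists_mem_of_hitTime_lt_top (h : hitTime Acc ω < ⊤) : ∃ t, ω t ∈ Acc := by
  by_contra! hω
  simp [hitTime, hω] at h

end HitTime

namespace MarkovPath

variable {P : S → PMF S}

def pathPrefix (n : ℕ) (ω : ℕ → S) : Fin (n + 1) → S := fun i => ω i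

noncomputable def prefixWeight (P : S → PMF S) {n : ℕ} (y : Fin (n + 1) → S) : ℝ≥0∞ :=
  ∏ i : Fin n, P (y i.castSucc) (y i.succ)

lemma prefixWeight_cons {n : ℕ} (a : S) (z : Fin (n + 1) → S) :
    prefixWeight P (Fin.cons a z : Fin (n + 2) → S) = P a (z 0) * prefixWeight P z := by
  simp [prefixWeight, Fin.prod_univ_succ, Fin.cons_succ]

def pathsStayingIn (B : Set S) (n : ℕ) : Set (ℕ → S) := {ω | ∀ i : Fin (n + 1), ω i ∈ B}

lemma pathsStayingIn_eq_preimage (B : Set S) (n : ℕ) :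
    pathsStayingIn B n = pathPrefix n ⁻¹' {y | ∀ i, y i ∈ B} := rfl

lemma antitone_pathsStayingIn (B : Set S) : Antitone (pathsStayingIn B) :=
  fun _ _ hnm _ hω i => hω (Fin.castLE (by omega) i)

def reachingStates (P : S → PMF S) (Acc : Set S) : Set S :=
  {t | t ∉ Acc ∧ ∃ a ∈ Acc, Relation.ReflTransGen (fun u v => P u v ≠ 0) t a}

lemma mem_pathsStayingIn_reachingStates {Acc : Set S} {ω : ℕ → S}
    (hω : ∀ t, P (ω t) (ω (t + 1)) ≠ 0) {n k : ℕ} (hk : ω k ∈ Acc) (hnk : n < k)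
    (hAcc : ∀ i < k, ω i ∉ Acc) : ω ∈ pathsStayingIn (reachingStates P Acc) n := fun i =>
  have hik : (i : ℕ) < k := by have := i.isLt; omega
  ⟨hAcc i hik, ω k, hk,
    (reflTransGen_of_succ_of_le (fun i j => P (ω i) (ω j) ≠ 0) (fun j _ => by simpa using hω j)
      hik.le).lift ω fun _ _ h => h⟩

lemma hitTime_le_tsum_indicator {Acc : Set S} {ω : ℕ → S} (hω : ∀ t, P (ω t) (ω (t + 1)) ≠ 0)
    (h : hitTime Acc ω < ⊤) :
    hitTime Acc ω ≤ ∑' n, (pathsStayingIn (reachingStates P Acc) n).indicator 1 ω := by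
  have hex := exists_mem_of_hitTime_lt_top h
  rw [hitTime_eq_find hex]
  calc (Nat.find hex : ℝ≥0∞)
      = ∑ n ∈ Finset.range (Nat.find hex),
          (pathsStayingIn (reachingStates P Acc) n).indicator 1 ω := by
        rw [Finset.sum_congr rfl fun n hn => Set.indicator_of_mem
          (mem_pathsStayingIn_reachingStates hω (Nat.find_spec hex) (Finset.mem_range.1 hn)
            fun i => Nat.find_min hex) _]
        simp
    _ ≤ _ := ENNReal.sum_le_tsum _

variable [MeasurableSpace S] {μ : S → Measure (ℕ → S)}

@[fun_prop]
lemma measurable_pathPrefix (n : ℕ) : Measurable (pathPrefix (S := S) n) :=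
  measurable_pi_lambda _ fun i => measurable_pi_apply (i : ℕ)

lemma measure_pathPrefix_preimage_singleton (hμ : IsPathMeasure P μ) (s : S) {n : ℕ}
    (y : Fin (n + 1) → S) :
    μ s (pathPrefix n ⁻¹' {y}) = (if y 0 = s then 1 else 0) * prefixWeight P y := by
  set x : ℕ → S := fun i => if h : i ≤ n then y ⟨i, by omega⟩ else s
  have hset : pathPrefix n ⁻¹' {y} = {ω | ∀ i ≤ n, ω i = x i} := by
    ext ω
    simp only [pathPrefix, mem_preimage, mem_singleton_iff, funext_iff, Fin.forall_iff,
      Nat.lt_succ_iff, mem_ofPred_eq]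
    exact forall₂_congr fun i hi => by simp [x, hi]
  rw [hset, hμ.2, prefixWeight, ← Fin.prod_univ_eq_prod_range (fun i => P (x i) (x (i + 1)))]
  simp [x]
  rfl

lemma measure_pathsStayingIn_le_one (hμ : IsPathMeasure P μ) (B : Set S) (n : ℕ) (t : S) :
    μ t (pathsStayingIn B n) ≤ 1 :=
  have := hμ.1 t
  prob_le_one

variable [Fintype S] [MeasurableSingletonClass S]

lemma measure_pathPrefix_preimage (hμ : IsPathMeasure P μ) (s : S) {n : ℕ}
    (E : Set (Fin (n + 1) → S)) :
    μ s (pathPrefix n ⁻¹' E) = ∑ y ∈ E.toFinset, (if y 0 = s then 1 else 0) * prefixWeight P y := by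
  rw [← Measure.map_apply (measurable_pathPrefix n) E.toFinite.measurableSet]
  conv_lhs => rw [← E.coe_toFinset, ← sum_measure_singleton]
  refine Finset.sum_congr rfl fun y _ => ?_
  rw [Measure.map_apply (measurable_pathPrefix n) (measurableSet_singleton y),
    measure_pathPrefix_preimage_singleton hμ]

lemma measure_pathPrefix_preimage_eq_zero (hμ : IsPathMeasure P μ) (s : S) {n : ℕ}
    {E : Set (Fin (n + 1) → S)} (hE : ∀ y ∈ E, y 0 = s → prefixWeight P y = 0) :
    μ s (pathPrefix n ⁻¹' E) = 0 := by
  rw [measure_pathPrefix_preimage hμ]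
  refine Finset.sum_eq_zero fun y hy => ?_
  split_ifs with h
  · rw [hE y (by simpa using hy) h, mul_zero]
  · rw [zero_mul]

lemma ae_transition_ne_zero (hμ : IsPathMeasure P μ) (s : S) :
    ∀ᵐ ω ∂μ s, ∀ t, P (ω t) (ω (t + 1)) ≠ 0 := by
  refine ae_all_iff.2 fun t => ae_iff.2 ?_
  simpa [pathPrefix] using measure_pathPrefix_preimage_eq_zero hμ s
    (E := {y : Fin (t + 2) → S | P (y (Fin.last t).castSucc) (y (Fin.last (t + 1))) = 0})
    fun y hy _ => Finset.prod_eq_zero (Finset.mem_univ (Fin.last t)) hy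

lemma measurableSet_pathsStayingIn (B : Set S) (n : ℕ) : MeasurableSet (pathsStayingIn B n) := by
  rw [pathsStayingIn_eq_preimage]
  exact measurable_pathPrefix n (Set.toFinite _).measurableSet

lemma measure_pathsStayingIn_eq_sum (hμ : IsPathMeasure P μ) (B : Set S) (n : ℕ) (t : S) :
    μ t (pathsStayingIn B n) =
      ∑ y : Fin (n + 1) → S, if (∀ i, y i ∈ B) ∧ y 0 = t then prefixWeight P y else 0 := by
  rw [pathsStayingIn_eq_preimage, measure_pathPrefix_preimage hμ, Set.toFinset_ofPred,
    Finset.sum_filter]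
  simp only [ite_and, ite_mul, one_mul, zero_mul]

lemma measure_pathsStayingIn_zero (hμ : IsPathMeasure P μ) (B : Set S) (t : S) :
    μ t (pathsStayingIn B 0) = B.indicator 1 t := by
  rw [measure_pathsStayingIn_eq_sum hμ, ← (Equiv.funUnique (Fin 1) S).symm.sum_comp]
  simp [prefixWeight, Set.indicator, and_comm (b := _ = t), ite_and]

lemma measure_pathsStayingIn_succ (hμ : IsPathMeasure P μ) (B : Set S) (n : ℕ) (t : S) :
    μ t (pathsStayingIn B (n + 1)) =
      B.indicator (fun t => ∑ u, P t u * μ u (pathsStayingIn B n)) t := by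
  have hcons (a : S) (z : Fin (n + 1) → S) :
      (if (∀ i, (Fin.cons a z : Fin (n + 2) → S) i ∈ B) ∧ (Fin.cons a z : Fin (n + 2) → S) 0 = t
        then prefixWeight P (Fin.cons a z : Fin (n + 2) → S) else 0) =
      if a = t then (if t ∈ B ∧ ∀ i, z i ∈ B then P t (z 0) * prefixWeight P z else 0) else 0 := by
    have hmem : (∀ i, (Fin.cons a z : Fin (n + 2) → S) i ∈ B) ↔ a ∈ B ∧ ∀ i, z i ∈ B :=
      Fin.forall_fin_succ.trans (by simp)
    by_cases ha : a = t
    · subst ha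
      simp [hmem, prefixWeight_cons]
    · simp [ha]
  rw [measure_pathsStayingIn_eq_sum hμ, ← Fintype.sum_equiv (Fin.consEquiv fun _ => S) _ _
    fun p => (hcons p.1 p.2).symm, Fintype.sum_prod_type]
  simp only [Finset.sum_ite_irrel, Finset.sum_const_zero, Finset.sum_ite_eq', Finset.mem_univ,
    if_true]
  by_cases ht : t ∈ B
  · simp only [measure_pathsStayingIn_eq_sum hμ, ht, true_and, Set.indicator_of_mem,
      Finset.mul_sum, mul_ite, mul_zero, ite_and]
    rw [Finset.sum_comm]
    refine Finset.sum_congr rfl fun y _ => ?_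
    split_ifs <;> simp
  · simp [ht]

lemma measure_pathsStayingIn_add_le (hμ : IsPathMeasure P μ) {B : Set S} {n : ℕ} {c : ℝ≥0∞}
    (hc : ∀ u ∈ B, μ u (pathsStayingIn B n) ≤ c) (m : ℕ) (t : S) :
    μ t (pathsStayingIn B (m + n)) ≤ c * μ t (pathsStayingIn B m) := by
  induction m generalizing t with
  | zero =>
    by_cases ht : t ∈ B
    · simpa [measure_pathsStayingIn_zero hμ, ht] using hc t ht
    · have h0 : μ t (pathsStayingIn B 0) = 0 := by simp [measure_pathsStayingIn_zero hμ, ht]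
      simpa [h0] using measure_mono_null (antitone_pathsStayingIn B (Nat.zero_le n)) h0
  | succ m ih =>
    rw [Nat.add_right_comm, measure_pathsStayingIn_succ hμ, measure_pathsStayingIn_succ hμ]
    by_cases ht : t ∈ B
    · simp only [Set.indicator_of_mem ht, Finset.mul_sum]
      exact Finset.sum_le_sum fun u _ =>
        (mul_le_mul_right (ih u) _).trans_eq (mul_left_comm _ _ _)
    · simp [ht]

lemma measure_pathsStayingIn_mul_le_pow (hμ : IsPathMeasure P μ) {B : Set S} {m : ℕ}
    {c : ℝ≥0∞} (hc : ∀ u ∈ B, μ u (pathsStayingIn B m) ≤ c) (k : ℕ) (t : S) :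
    μ t (pathsStayingIn B (k * m)) ≤ c ^ k := by
  induction k with
  | zero => simpa using measure_pathsStayingIn_le_one hμ B 0 t
  | succ k ih =>
    calc μ t (pathsStayingIn B ((k + 1) * m)) ≤ c * μ t (pathsStayingIn B (k * m)) := by
          rw [Nat.succ_mul]; exact measure_pathsStayingIn_add_le hμ hc _ t
      _ ≤ c * c ^ k := by gcongr
      _ = c ^ (k + 1) := (pow_succ' c k).symm

lemma exists_measure_pathsStayingIn_lt_one (hμ : IsPathMeasure P μ) {B : Set S} {u a : S}
    (hua : Relation.ReflTransGen (fun u v => P u v ≠ 0) u a) (ha : a ∉ B) :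
    ∃ n, μ u (pathsStayingIn B n) < 1 := by
  induction hua using Relation.ReflTransGen.head_induction_on with
  | refl => exact ⟨0, by simp [measure_pathsStayingIn_zero hμ, ha]⟩
  | head huv _ ih =>
    obtain ⟨n, hn⟩ := ih
    refine ⟨n + 1, ?_⟩
    rw [measure_pathsStayingIn_succ hμ]
    exact (Set.indicator_le_self _ _ _).trans_lt
      (PMF.sum_mul_lt_one _ (measure_pathsStayingIn_le_one hμ B n) huv hn)

omit [MeasurableSingletonClass S] in
lemma exists_measure_pathsStayingIn_le_lt_one {B : Set S}
    (h : ∀ u ∈ B, ∃ n, μ u (pathsStayingIn B n) < 1) :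
    ∃ m, ∃ c < 1, ∀ u ∈ B, μ u (pathsStayingIn B (m + 1)) ≤ c := by
  choose! N hN using h
  have hlt (u) (hu : u ∈ B) : μ u (pathsStayingIn B (Finset.univ.sup N + 1)) < 1 :=
    (measure_mono (antitone_pathsStayingIn B
      ((Finset.le_sup (Finset.mem_univ u)).trans (Nat.le_succ _)))).trans_lt (hN u hu)
  exact ⟨_, B.toFinset.sup fun u => μ u (pathsStayingIn B (Finset.univ.sup N + 1)),
    (Finset.sup_lt_iff (by simp)).2 fun u hu => hlt u (Set.mem_toFinset.1 hu),
    fun u hu => Finset.le_sup (f := fun u => μ u _) (Set.mem_toFinset.2 hu)⟩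

lemma tsum_measure_pathsStayingIn_ne_top (hμ : IsPathMeasure P μ) {B : Set S}
    (h : ∀ u ∈ B, ∃ n, μ u (pathsStayingIn B n) < 1) (t : S) :
    ∑' n, μ t (pathsStayingIn B n) ≠ ⊤ := by
  obtain ⟨m, c, hc, hmc⟩ := exists_measure_pathsStayingIn_le_lt_one h
  have hle (n : ℕ) : μ t (pathsStayingIn B n) ≤ c ^ (n / (m + 1)) :=
    (measure_mono (antitone_pathsStayingIn B (Nat.div_mul_le_self n (m + 1)))).trans
      (measure_pathsStayingIn_mul_le_pow hμ hmc _ t)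
  refine ne_top_of_le_ne_top ?_ (ENNReal.tsum_le_tsum hle)
  rw [ENNReal.tsum_pow_div]
  exact ENNReal.mul_ne_top (ENNReal.natCast_ne_top _) (ENNReal.inv_ne_top.2 (tsub_pos_of_lt hc).ne')

theorem lintegral_hitTime_ne_top (hμ : IsPathMeasure P μ) (Acc : Set S) (s : S) :
    ∫⁻ ω in {ω | hitTime Acc ω < ⊤}, hitTime Acc ω ∂μ s ≠ ⊤ := by
  set B := reachingStates P Acc
  have hmeas := measurableSet_pathsStayingIn (S := S) B
  have hB : ∀ u ∈ B, ∃ n, μ u (pathsStayingIn B n) < 1 := fun u ⟨_, a, ha, hua⟩ =>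
    exists_measure_pathsStayingIn_lt_one hμ hua fun h => h.1 ha
  refine ne_top_of_le_ne_top (tsum_measure_pathsStayingIn_ne_top hμ hB s) ?_
  calc ∫⁻ ω in {ω | hitTime Acc ω < ⊤}, hitTime Acc ω ∂μ s
      ≤ ∫⁻ ω in {ω | hitTime Acc ω < ⊤}, ∑' n, (pathsStayingIn B n).indicator 1 ω ∂μ s :=
        setLIntegral_mono_ae (by fun_prop (disch := exact hmeas _))
          ((ae_transition_ne_zero hμ s).mono fun ω hω h => hitTime_le_tsum_indicator hω h)
    _ ≤ ∫⁻ ω, ∑' n, (pathsStayingIn B n).indicator 1 ω ∂μ s := setLIntegral_le_lintegral _ _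
    _ = ∑' n, μ s (pathsStayingIn B n) := by
        rw [lintegral_tsum fun n => (measurable_one.indicator (hmeas n)).aemeasurable]
        simp_rw [lintegral_indicator_one (hmeas _)]

end MarkovPath

theorem hittingTime_integral_finite_general
    [Fintype S] [MeasurableSpace S] [MeasurableSingletonClass S]
    (P : S → PMF S) (Acc : Set S) (μ : S → Measure (ℕ → S))
    (hμ : IsPathMeasure P μ) :
    (∀ s : S, (∫⁻ ω in {ω | hitTime Acc ω < ⊤}, hitTime Acc ω ∂ (μ s)) ≠ ⊤) ∧
    (∀ s : S, 0 < μ s {ω | hitTime Acc ω < ⊤} →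
      (∫⁻ ω in {ω | hitTime Acc ω < ⊤}, hitTime Acc ω ∂ (μ s)) /
        μ s {ω | hitTime Acc ω < ⊤} ≠ ⊤) ∧
    (⨆ s ∈ {s : S | 0 < μ s {ω | hitTime Acc ω < ⊤}},
      (∫⁻ ω in {ω | hitTime Acc ω < ⊤}, hitTime Acc ω ∂ (μ s)) /
        μ s {ω | hitTime Acc ω < ⊤}) ≠ ⊤ := by
  have hint (s : S) := MarkovPath.lintegral_hitTime_ne_top hμ Acc s
  have hcond (s : S) (hs : 0 < μ s {ω | hitTime Acc ω < ⊤}) :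
      (∫⁻ ω in {ω | hitTime Acc ω < ⊤}, hitTime Acc ω ∂ (μ s)) /
        μ s {ω | hitTime Acc ω < ⊤} ≠ ⊤ :=
    ENNReal.div_ne_top (hint s) hs.ne'
  exact ⟨hint, hcond, iSup_ne_top fun s => iSup_ne_top fun hs => hcond s hs⟩

/-- the hitting time of `Acc` has finite expectation on the event that the
chain visits `Acc`; hence the conditional expectation given visiting `Acc` is finite, and
its supremum over the states from which `Acc` is visited with positive probability is
finite. -/
theorem hittingTime_integral_finite
    [Fintype S] [Nonempty S] [MeasurableSpace S] [MeasurableSingletonClass S]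
    (P : S → PMF S) (Acc : Set S) (μ : S → Measure (ℕ → S))
    (hμ : IsPathMeasure P μ) :
    (∀ s : S, (∫⁻ ω in {ω | hitTime Acc ω < ⊤}, hitTime Acc ω ∂ (μ s)) ≠ ⊤) ∧
    (∀ s : S, 0 < μ s {ω | hitTime Acc ω < ⊤} →
      (∫⁻ ω in {ω | hitTime Acc ω < ⊤}, hitTime Acc ω ∂ (μ s)) /
        μ s {ω | hitTime Acc ω < ⊤} ≠ ⊤) ∧
    (⨆ s ∈ {s : S | 0 < μ s {ω | hitTime Acc ω < ⊤}},
      (∫⁻ ω in {ω | hitTime Acc ω < ⊤}, hitTime Acc ω ∂ (μ s)) /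
        μ s {ω | hitTime Acc ω < ⊤}) ≠ ⊤ :=
  hittingTime_integral_finite_general P Acc μ hμ
end

section
/- Assume Acc is absorbing. Then for every s ∈ S with s ∉ Acc: V(s) = r_n · ∫_{{ω : N(ω) < ∞}} γ^{N(ω) − 1} dμ_s(ω). -/
open MeasureTheory Set
open scoped ENNReal Classical

variable {S : Type*}

private lemma ret_eq_aux (Acc : Set S) (γacc γ rn : ℝ)
    (hγ : 0 < γ ∧ γ < 1) (hγacc : 0 < γacc ∧ γacc < 1) (ω : ℕ → S)
    (h0 : ω 0 ∉ Acc) (hab : ∀ n, ω n ∈ Acc → ω (n + 1) ∈ Acc) :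
    Ret Acc γacc γ rn ω =
      rn * Set.indicator {ω : ℕ → S | ∃ t, ω t ∈ Acc}
        (fun ω => γ ^ (sInf {t | ω t ∈ Acc} - 1)) ω := by
  by_cases hhit : ∃ t, ω t ∈ Acc
  · have hNmem : ω (sInf {t | ω t ∈ Acc}) ∈ Acc := Nat.sInf_mem hhit
    have hN0 : sInf {t | ω t ∈ Acc} ≠ 0 := fun h => h0 (h ▸ hNmem)
    obtain ⟨m, hm⟩ := Nat.exists_eq_succ_of_ne_zero hN0
    have key : ∀ t, ω t ∈ Acc ↔ m + 1 ≤ t := by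
      intro t
      constructor
      · intro h
        have := Nat.sInf_le (show t ∈ {t | ω t ∈ Acc} from h)
        omega
      · intro h
        have hall : ∀ j, ω (sInf {t | ω t ∈ Acc} + j) ∈ Acc := by
          intro j; induction j with
          | zero => simpa using hNmem
          | succ j ih => exact hab _ ih
        have := hall (t - (m + 1))
        rw [hm] at this
        rwa [show m + 1 + (t - (m + 1)) = t by omega] at this
    have hRw : ∀ t, Rw Acc γacc rn (ω (t + 1)) = if m ≤ t then (1 - γacc) * rn else 0 := by
      intro t; unfold Rw
      by_cases h : m ≤ t
      · rw [if_pos ((key _).mpr (by omega)), if_pos h]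
      · rw [if_neg (fun hc => h (by have := (key _).mp hc; omega)), if_neg h]
    have hΓ : ∀ k, Γw Acc γacc γ (ω (k + 1)) = if m ≤ k then γacc else γ := by
      intro k; unfold Γw
      by_cases h : m ≤ k
      · rw [if_pos ((key _).mpr (by omega)), if_pos h]
      · rw [if_neg (fun hc => h (by have := (key _).mp hc; omega)), if_neg h]
    have hshift : ∀ j, Rw Acc γacc rn (ω (j + m + 1)) *
        ∏ k ∈ Finset.range (j + m), Γw Acc γacc γ (ω (k + 1)) =
        ((1 - γacc) * rn * γ ^ m) * γacc ^ j := by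
      intro j
      rw [hRw, if_pos (by omega)]
      have hprod : ∏ k ∈ Finset.range (j + m), Γw Acc γacc γ (ω (k + 1)) = γ ^ m * γacc ^ j := by
        rw [show j + m = m + j by omega, Finset.prod_range_add]
        congr 1
        · rw [Finset.prod_congr rfl fun k hk => ?_, Finset.prod_const, Finset.card_range]
          rw [hΓ, if_neg (by have := Finset.mem_range.mp hk; omega)]
        · rw [Finset.prod_congr rfl fun k hk => ?_, Finset.prod_const, Finset.card_range]
          rw [hΓ, if_pos (by omega)]
      rw [hprod]; ring
    have hsummable : Summable (fun j => Rw Acc γacc rn (ω (j + m + 1)) *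
        ∏ k ∈ Finset.range (j + m), Γw Acc γacc γ (ω (k + 1))) := by
      simp only [hshift]
      exact (summable_geometric_of_lt_one hγacc.1.le hγacc.2).mul_left _
    have hsum : Summable (fun t => Rw Acc γacc rn (ω (t + 1)) *
        ∏ k ∈ Finset.range t, Γw Acc γacc γ (ω (k + 1))) :=
      (summable_nat_add_iff m).mp hsummable
    have hbig := (Summable.sum_add_tsum_nat_add m hsum).symm
    have hsmall : ∑ t ∈ Finset.range m, (Rw Acc γacc rn (ω (t + 1)) *
        ∏ k ∈ Finset.range t, Γw Acc γacc γ (ω (k + 1))) = 0 := by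
      refine Finset.sum_eq_zero fun t ht => ?_
      rw [hRw, if_neg (by have := Finset.mem_range.mp ht; omega), zero_mul]
    have htail : (∑' j, Rw Acc γacc rn (ω (j + m + 1)) *
        ∏ k ∈ Finset.range (j + m), Γw Acc γacc γ (ω (k + 1))) = rn * γ ^ m := by
      calc (∑' j, Rw Acc γacc rn (ω (j + m + 1)) *
              ∏ k ∈ Finset.range (j + m), Γw Acc γacc γ (ω (k + 1)))
          = ∑' j, ((1 - γacc) * rn * γ ^ m) * γacc ^ j := by
            exact tsum_congr hshift
        _ = ((1 - γacc) * rn * γ ^ m) * (1 - γacc)⁻¹ := by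
            rw [tsum_mul_left, tsum_geometric_of_lt_one hγacc.1.le hγacc.2]
        _ = rn * γ ^ m * ((1 - γacc) * (1 - γacc)⁻¹) := by ring
        _ = rn * γ ^ m := by
            rw [mul_inv_cancel₀ (by linarith [hγacc.2] : (1 : ℝ) - γacc ≠ 0), mul_one]
    rw [Set.indicator_of_mem (show ω ∈ {ω : ℕ → S | ∃ t, ω t ∈ Acc} from hhit)]
    unfold Ret
    rw [hbig, hsmall, zero_add, htail, hm]
    simp
  · rw [Set.indicator_of_notMem (show ω ∉ {ω : ℕ → S | ∃ t, ω t ∈ Acc} from hhit), mul_zero]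
    unfold Ret Rw
    push_neg at hhit
    simp [hhit]

private lemma bad_zero [Fintype S] [Nonempty S] [MeasurableSpace S]
    (P : S → PMF S) (Acc : Set S) (μ : S → Measure (ℕ → S))
    (hμ : IsPathMeasure P μ) (habs : ∀ s ∈ Acc, (P s).support ⊆ Acc) (s : S) (n : ℕ) :
    μ s {ω | ω n ∈ Acc ∧ ω (n + 1) ∉ Acc} = 0 := by
  have hcyl : ∀ v : ℕ → S, v n ∈ Acc → v (n + 1) ∉ Acc →
      μ s {ω | ∀ i ≤ n + 1, ω i = v i} = 0 := by
    intro v hv1 hv2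
    rw [hμ.2 s (n + 1) v]
    have hz : (P (v n)) (v (n + 1)) = 0 := by
      by_contra h
      exact hv2 (habs _ hv1 ((PMF.mem_support_iff _ _).mpr h))
    rw [Finset.prod_eq_zero (Finset.mem_range.mpr (Nat.lt_succ_self n)) hz, mul_zero]
  have hcover : {ω : ℕ → S | ω n ∈ Acc ∧ ω (n + 1) ∉ Acc} ⊆
      ⋃ v : Fin (n + 2) → S,
        ({ω : ℕ → S | ∀ i ≤ n + 1, ω i =
            (fun i : ℕ => if h : i < n + 2 then v ⟨i, h⟩ else Classical.arbitrary S) i}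
          ∩ {ω : ℕ → S | ω n ∈ Acc ∧ ω (n + 1) ∉ Acc}) := by
    intro ω hω
    refine Set.mem_iUnion.mpr ⟨fun i => ω i, ⟨?_, hω⟩⟩
    intro i hi
    simp only
    rw [dif_pos (by omega)]
  refine measure_mono_null hcover (measure_iUnion_null fun v => ?_)
  set x : ℕ → S := fun i => if h : i < n + 2 then v ⟨i, h⟩ else Classical.arbitrary S with hx
  by_cases hgood : x n ∈ Acc ∧ x (n + 1) ∉ Acc
  · exact measure_mono_null Set.inter_subset_left (hcyl x hgood.1 hgood.2)
  · have hempty : ({ω : ℕ → S | ∀ i ≤ n + 1, ω i = x i} ∩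
        {ω : ℕ → S | ω n ∈ Acc ∧ ω (n + 1) ∉ Acc}) = ∅ := by
      ext ω
      simp only [Set.mem_inter_iff, Set.mem_setOf_eq, Set.mem_empty_iff_false, iff_false]
      rintro ⟨h1, h2, h3⟩
      exact hgood ⟨h1 n (by omega) ▸ h2, h1 (n + 1) le_rfl ▸ h3⟩
    rw [hempty]
    exact measure_empty

/-- for an absorbing unsafe set and a safe start state, the value equals
`rn` times the integral of `γ ^ (N(ω) - 1)` over the event that the path hits `Acc`,
where `N` is the hitting time of `Acc`. -/
theorem value_eq_rn_mul_integral_pow_hitting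
    [Fintype S] [Nonempty S] [MeasurableSpace S] [MeasurableSingletonClass S]
    (P : S → PMF S) (Acc : Set S) (μ : S → Measure (ℕ → S))
    (hμ : IsPathMeasure P μ)
    (habs : ∀ s ∈ Acc, (P s).support ⊆ Acc)
    (rn γ γacc : ℝ) (hrn : rn < 0) (hγ : 0 < γ ∧ γ < 1) (hγacc : 0 < γacc ∧ γacc < 1)
    (s : S) (hs : s ∉ Acc) :
    Val Acc γacc γ rn μ s =
      rn * ∫ ω in {ω : ℕ → S | ∃ t, ω t ∈ Acc},
        γ ^ (sInf {t | ω t ∈ Acc} - 1) ∂ (μ s) := by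
  haveI : IsProbabilityMeasure (μ s) := hμ.1 s
  -- the hitting event is measurable
  have hA : MeasurableSet {ω : ℕ → S | ∃ t, ω t ∈ Acc} := by
    have : {ω : ℕ → S | ∃ t, ω t ∈ Acc} = ⋃ t, (fun ω : ℕ → S => ω t) ⁻¹' Acc := by
      ext ω; simp
    rw [this]
    exact MeasurableSet.iUnion fun t => (measurable_pi_apply t) (Acc.toFinite.measurableSet)
  -- a.e. the path starts at s
  have h0ae : ∀ᵐ ω ∂ (μ s), ω 0 = s := by
    have h1 : μ s {ω | ω 0 = s} = 1 := by
      have h2 := hμ.2 s 0 (fun _ => s)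
      have hset : {ω : ℕ → S | ∀ i ≤ 0, ω i = s} = {ω : ℕ → S | ω 0 = s} := by
        ext ω
        constructor
        · exact fun h => h 0 le_rfl
        · intro h i hi
          rw [Nat.le_zero.mp hi]; exact h
      rw [hset] at h2
      simpa using h2
    have hms : MeasurableSet {ω : ℕ → S | ω 0 = s} := by
      have : {ω : ℕ → S | ω 0 = s} = (fun ω : ℕ → S => ω 0) ⁻¹' {s} := by
        ext ω; simp
      rw [this]
      exact (measurable_pi_apply 0) (measurableSet_singleton s)
    rw [ae_iff]
    have : {ω : ℕ → S | ¬ ω 0 = s} = {ω : ℕ → S | ω 0 = s}ᶜ := rfl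
    rw [this, measure_compl hms (measure_ne_top _ _), h1, measure_univ, tsub_self]
  -- a.e. absorption
  have habsae : ∀ᵐ ω ∂ (μ s), ∀ n, ω n ∈ Acc → ω (n + 1) ∈ Acc := by
    rw [ae_all_iff]
    intro n
    rw [ae_iff]
    have heq : {ω : ℕ → S | ¬ (ω n ∈ Acc → ω (n + 1) ∈ Acc)} =
        {ω : ℕ → S | ω n ∈ Acc ∧ ω (n + 1) ∉ Acc} := by
      ext ω; simp [Classical.not_imp]
    rw [heq]
    exact bad_zero P Acc μ hμ habs s n
  have hcong : ∫ ω, Ret Acc γacc γ rn ω ∂ (μ s) =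
      ∫ ω, rn * Set.indicator {ω : ℕ → S | ∃ t, ω t ∈ Acc}
        (fun ω => γ ^ (sInf {t | ω t ∈ Acc} - 1)) ω ∂ (μ s) := by
    refine integral_congr_ae ?_
    filter_upwards [h0ae, habsae] with ω hω0 hωa
    exact ret_eq_aux Acc γacc γ rn hγ hγacc ω (by rw [hω0]; exact hs) hωa
  rw [Val, hcong, integral_const_mul, integral_indicator hA]
end

section
/- Assume Acc is absorbing. Then for every γ ∈ (0,1) and every s ∈ S: V(s) = 0 if and only if μ_s(Safe) = 1. -/
open MeasureTheory Set
open scoped ENNReal Classical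

variable {S : Type*}

section Aux

variable {Acc : Set S} {γacc γ rn : ℝ}

private lemma prod_Γw_nonneg (h1 : 0 < γacc) (h2 : 0 < γ) (ω : ℕ → S) (t : ℕ) :
    0 ≤ ∏ k ∈ Finset.range t, Γw Acc γacc γ (ω (k + 1)) :=
  Finset.prod_nonneg fun k _ => by unfold Γw; split <;> linarith

private lemma prod_Γw_pos (h1 : 0 < γacc) (h2 : 0 < γ) (ω : ℕ → S) (t : ℕ) :
    0 < ∏ k ∈ Finset.range t, Γw Acc γacc γ (ω (k + 1)) :=
  Finset.prod_pos fun k _ => by unfold Γw; split <;> linarith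

private lemma prod_Γw_le (h1 : 0 < γacc) (h2 : 0 < γ) (ω : ℕ → S) (t : ℕ) :
    ∏ k ∈ Finset.range t, Γw Acc γacc γ (ω (k + 1)) ≤ max γ γacc ^ t := by
  calc ∏ k ∈ Finset.range t, Γw Acc γacc γ (ω (k + 1))
      ≤ ∏ _k ∈ Finset.range t, max γ γacc := by
        refine Finset.prod_le_prod (fun k _ => by unfold Γw; split <;> linarith)
          (fun k _ => ?_)
        unfold Γw; split
        · exact le_max_right _ _
        · exact le_max_left _ _
    _ = max γ γacc ^ t := by simp

private lemma Rw_nonpos (hrn : rn < 0) (hγacc : γacc < 1) (s : S) :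
    Rw Acc γacc rn s ≤ 0 := by
  unfold Rw; split
  · nlinarith
  · exact le_refl 0

private lemma abs_Rw_le (hrn : rn < 0) (hγacc : γacc < 1) (s : S) :
    |Rw Acc γacc rn s| ≤ (1 - γacc) * |rn| := by
  unfold Rw; split
  · rw [abs_mul, abs_of_pos (by linarith : (0:ℝ) < 1 - γacc)]
  · simp only [abs_zero]
    have := abs_nonneg rn
    nlinarith

private lemma term_nonpos (hrn : rn < 0) (h1 : 0 < γacc) (h1' : γacc < 1) (h2 : 0 < γ)
    (ω : ℕ → S) (t : ℕ) :
    Rw Acc γacc rn (ω (t + 1)) * ∏ k ∈ Finset.range t, Γw Acc γacc γ (ω (k + 1)) ≤ 0 :=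
  mul_nonpos_iff.mpr (Or.inr ⟨Rw_nonpos hrn h1' _, prod_Γw_nonneg h1 h2 ω t⟩)

private lemma abs_term_le (hrn : rn < 0) (h1 : 0 < γacc) (h1' : γacc < 1) (h2 : 0 < γ)
    (ω : ℕ → S) (t : ℕ) :
    |Rw Acc γacc rn (ω (t + 1)) * ∏ k ∈ Finset.range t, Γw Acc γacc γ (ω (k + 1))|
      ≤ ((1 - γacc) * |rn|) * max γ γacc ^ t := by
  rw [abs_mul]
  refine mul_le_mul (abs_Rw_le hrn h1' _) ?_ (abs_nonneg _)
    (mul_nonneg (by linarith) (abs_nonneg _))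
  rw [abs_of_nonneg (prod_Γw_nonneg h1 h2 ω t)]
  exact prod_Γw_le h1 h2 ω t

private lemma summable_term (hrn : rn < 0) (h1 : 0 < γacc) (h1' : γacc < 1)
    (h2 : 0 < γ) (h2' : γ < 1) (ω : ℕ → S) :
    Summable (fun t =>
      Rw Acc γacc rn (ω (t + 1)) * ∏ k ∈ Finset.range t, Γw Acc γacc γ (ω (k + 1))) := by
  have hm : Summable (fun t : ℕ => ((1 - γacc) * |rn|) * max γ γacc ^ t) :=
    (summable_geometric_of_lt_one (le_max_of_le_left h2.le) (max_lt h2' h1')).mul_left _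
  refine Summable.of_abs (hm.of_nonneg_of_le (fun t => abs_nonneg _) ?_)
  exact fun t => abs_term_le hrn h1 h1' h2 ω t

private lemma ret_eq_zero_iff (hrn : rn < 0) (h1 : 0 < γacc) (h1' : γacc < 1)
    (h2 : 0 < γ) (h2' : γ < 1) (ω : ℕ → S) :
    Ret Acc γacc γ rn ω = 0 ↔ ∀ t, ω (t + 1) ∉ Acc := by
  constructor
  · intro h
    by_contra hc
    push_neg at hc
    obtain ⟨t₀, ht₀⟩ := hc
    set f : ℕ → ℝ := fun t =>
      Rw Acc γacc rn (ω (t + 1)) * ∏ k ∈ Finset.range t, Γw Acc γacc γ (ω (k + 1)) with hf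
    have hsum : Summable f := summable_term hrn h1 h1' h2 h2' ω
    have hneg : f t₀ < 0 := by
      have hR : Rw Acc γacc rn (ω (t₀ + 1)) = (1 - γacc) * rn := if_pos ht₀
      have : Rw Acc γacc rn (ω (t₀ + 1)) < 0 := by rw [hR]; nlinarith
      exact mul_neg_of_neg_of_pos this (prod_Γw_pos h1 h2 ω t₀)
    have hle : (fun t => -f t) t₀ ≤ ∑' t, -f t :=
      Summable.le_tsum hsum.neg t₀ (fun j _ => by
        simpa using term_nonpos hrn h1 h1' h2 ω j)
    rw [tsum_neg] at hle
    have : Ret Acc γacc γ rn ω < 0 := by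
      have : 0 < -Ret Acc γacc γ rn ω := lt_of_lt_of_le (by simpa using hneg) hle
      linarith
    exact absurd h this.ne
  · intro h
    have : ∀ t, Rw Acc γacc rn (ω (t + 1)) *
        ∏ k ∈ Finset.range t, Γw Acc γacc γ (ω (k + 1)) = 0 := fun t => by
      rw [Rw, if_neg (h t), zero_mul]
    simp [Ret, this]

private lemma measurable_ret [MeasurableSpace S] [Countable S] [MeasurableSingletonClass S]
    (hrn : rn < 0) (h1 : 0 < γacc) (h1' : γacc < 1) (h2 : 0 < γ) (h2' : γ < 1) :
    Measurable (Ret Acc γacc γ rn : (ℕ → S) → ℝ) := by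
  have hterm : ∀ t : ℕ, Measurable (fun ω : ℕ → S =>
      Rw Acc γacc rn (ω (t + 1)) * ∏ k ∈ Finset.range t, Γw Acc γacc γ (ω (k + 1))) := by
    intro t
    refine Measurable.mul
      (Measurable.comp (g := Rw Acc γacc rn) (measurable_of_countable _)
        (measurable_pi_apply (t + 1))) ?_
    exact Finset.measurable_prod _ (fun k _ =>
      Measurable.comp (g := Γw Acc γacc γ) (measurable_of_countable _)
        (measurable_pi_apply (k + 1)))
  refine measurable_of_tendsto_metrizable
    (f := fun n ω => ∑ t ∈ Finset.range n,
      Rw Acc γacc rn (ω (t + 1)) * ∏ k ∈ Finset.range t, Γw Acc γacc γ (ω (k + 1)))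
    (fun n => Finset.measurable_sum _ (fun t _ => hterm t)) ?_
  rw [tendsto_pi_nhds]
  intro ω
  exact (summable_term hrn h1 h1' h2 h2' ω).hasSum.tendsto_sum_nat

private lemma abs_ret_le (hrn : rn < 0) (h1 : 0 < γacc) (h1' : γacc < 1)
    (h2 : 0 < γ) (h2' : γ < 1) (ω : ℕ → S) :
    |Ret Acc γacc γ rn ω| ≤ ((1 - γacc) * |rn|) * (1 - max γ γacc)⁻¹ := by
  have hm0 : (0:ℝ) ≤ max γ γacc := le_max_of_le_left h2.le
  have hm1 : max γ γacc < 1 := max_lt h2' h1'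
  have hsum : Summable (fun t : ℕ => ((1 - γacc) * |rn|) * max γ γacc ^ t) :=
    (summable_geometric_of_lt_one hm0 hm1).mul_left _
  have hsn : Summable (fun t => ‖Rw Acc γacc rn (ω (t + 1)) *
      ∏ k ∈ Finset.range t, Γw Acc γacc γ (ω (k + 1))‖) := by
    simp only [Real.norm_eq_abs]
    exact hsum.of_nonneg_of_le (fun t => abs_nonneg _)
      (fun t => abs_term_le hrn h1 h1' h2 ω t)
  calc |Ret Acc γacc γ rn ω|
      ≤ ∑' t, |Rw Acc γacc rn (ω (t + 1)) *
          ∏ k ∈ Finset.range t, Γw Acc γacc γ (ω (k + 1))| := by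
        rw [Ret]
        simpa only [Real.norm_eq_abs] using norm_tsum_le_tsum_norm hsn
    _ ≤ ∑' t : ℕ, ((1 - γacc) * |rn|) * max γ γacc ^ t := by
        refine Summable.tsum_le_tsum (fun t => abs_term_le hrn h1 h1' h2 ω t) ?_ hsum
        exact hsum.of_nonneg_of_le (fun t => abs_nonneg _)
          (fun t => abs_term_le hrn h1 h1' h2 ω t)
    _ = ((1 - γacc) * |rn|) * (1 - max γ γacc)⁻¹ := by
        rw [tsum_mul_left, tsum_geometric_of_lt_one hm0 hm1]

end Aux

/-- for an absorbing unsafe set, the value at `s` is zero iff the chain is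
almost surely safe from `s`, for every discount factor `γ ∈ (0,1)`. -/
theorem value_eq_zero_iff_safe_ae
    [Fintype S] [Nonempty S] [MeasurableSpace S] [MeasurableSingletonClass S]
    (P : S → PMF S) (Acc : Set S) (μ : S → Measure (ℕ → S))
    (hμ : IsPathMeasure P μ)
    (habs : ∀ s ∈ Acc, (P s).support ⊆ Acc)
    (rn γacc : ℝ) (hrn : rn < 0) (hγacc : 0 < γacc ∧ γacc < 1) :
    ∀ γ : ℝ, 0 < γ → γ < 1 → ∀ s : S,
      (Val Acc γacc γ rn μ s = 0 ↔ μ s {ω | ∀ t, ω t ∉ Acc} = 1) := by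
  obtain ⟨h1, h1'⟩ := hγacc
  intro γ h2 h2' s
  obtain ⟨hprob, hcyl⟩ := hμ
  haveI := hprob s
  have hAccMeas : MeasurableSet Acc := Acc.toFinite.measurableSet
  -- measurability of safe sets
  have hSafe1Meas : MeasurableSet {ω : ℕ → S | ∀ t, ω (t + 1) ∉ Acc} := by
    have : {ω : ℕ → S | ∀ t, ω (t + 1) ∉ Acc} =
        ⋂ t, (fun ω : ℕ → S => ω (t + 1)) ⁻¹' Accᶜ := by ext; simp [Set.mem_iInter]
    rw [this]
    exact MeasurableSet.iInter fun t => (measurable_pi_apply _) hAccMeas.compl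
  have hSafeMeas : MeasurableSet {ω : ℕ → S | ∀ t, ω t ∉ Acc} := by
    have : {ω : ℕ → S | ∀ t, ω t ∉ Acc} =
        ⋂ t, (fun ω : ℕ → S => ω t) ⁻¹' Accᶜ := by ext; simp [Set.mem_iInter]
    rw [this]
    exact MeasurableSet.iInter fun t => (measurable_pi_apply _) hAccMeas.compl
  -- Ret measurable & integrable
  have hmeas := measurable_ret (Acc := Acc) (S := S) hrn h1 h1' h2 h2'
  have hint : Integrable (Ret Acc γacc γ rn) (μ s) := by
    refine ⟨hmeas.aestronglyMeasurable, HasFiniteIntegral.of_bounded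
      (C := ((1 - γacc) * |rn|) * (1 - max γ γacc)⁻¹) (ae_of_all _ ?_)⟩
    exact fun ω => by simpa [Real.norm_eq_abs] using abs_ret_le hrn h1 h1' h2 h2' ω
  -- V = 0 iff Ret = 0 a.e.
  have hV0 : Val Acc γacc γ rn μ s = 0 ↔ Ret Acc γacc γ rn =ᵐ[μ s] 0 := by
    have hnn : 0 ≤ fun ω => -Ret Acc γacc γ rn ω := by
      intro ω
      have : Ret Acc γacc γ rn ω ≤ 0 :=
        tsum_nonpos (term_nonpos hrn h1 h1' h2 ω)
      simpa using this
    have := integral_eq_zero_iff_of_nonneg hnn hint.neg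
    rw [integral_neg, neg_eq_zero] at this
    rw [Val, this]
    constructor
    · intro h; filter_upwards [h] with ω hω using by simpa using hω
    · intro h; filter_upwards [h] with ω hω using by simpa using hω
  -- Ret = 0 a.e. iff μ Safe₁ = 1
  have hRet1 : (Ret Acc γacc γ rn =ᵐ[μ s] 0) ↔ μ s {ω | ∀ t, ω (t + 1) ∉ Acc} = 1 := by
    rw [Filter.EventuallyEq, ae_iff]
    have hset : {ω : ℕ → S | ¬ Ret Acc γacc γ rn ω = (0 : (ℕ → S) → ℝ) ω} =
        {ω : ℕ → S | ∀ t, ω (t + 1) ∉ Acc}ᶜ := by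
      ext ω
      simp only [Set.mem_setOf_eq, Set.mem_compl_iff, Pi.zero_apply]
      rw [not_iff_not]
      exact ret_eq_zero_iff hrn h1 h1' h2 h2' ω
    rw [hset]
    exact prob_compl_eq_zero_iff hSafe1Meas
  rw [hV0, hRet1]
  -- Now the combinatorial part: μ Safe₁ = 1 ↔ μ Safe = 1
  constructor
  · intro hSafe1
    -- first: s ∉ Acc, else contradiction via absorbing
    have hsAcc : s ∉ Acc := by
      intro hs
      obtain ⟨s', hs'⟩ := (P s).support_nonempty
      have hs'Acc : s' ∈ Acc := habs s hs hs'
      set x : ℕ → S := fun i => if i = 0 then s else s' with hx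
      have hcylset : MeasurableSet {ω : ℕ → S | ∀ i ≤ 1, ω i = x i} := by
        have : {ω : ℕ → S | ∀ i ≤ 1, ω i = x i} =
            ⋂ i ∈ Finset.range 2, (fun ω : ℕ → S => ω i) ⁻¹' {x i} := by
          ext ω
          simp only [Set.mem_setOf_eq, Set.mem_iInter, Finset.mem_range, Set.mem_preimage,
            Set.mem_singleton_iff]
          constructor
          · intro h i hi; exact h i (by omega)
          · intro h i hi; exact h i (by omega)
        rw [this]
        exact MeasurableSet.biInter (Set.to_countable _)
          fun i _ => (measurable_pi_apply _) (measurableSet_singleton _)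
      have hcylval : μ s {ω : ℕ → S | ∀ i ≤ 1, ω i = x i} = (P s) s' := by
        rw [hcyl s 1 x]
        simp [hx]
      have hdisj : Disjoint {ω : ℕ → S | ∀ t, ω (t + 1) ∉ Acc}
          {ω : ℕ → S | ∀ i ≤ 1, ω i = x i} := by
        rw [Set.disjoint_left]
        intro ω hω hω'
        have : ω 1 = s' := by simpa [hx] using hω' 1 le_rfl
        exact hω 0 (this ▸ hs'Acc)
      have hle : μ s {ω : ℕ → S | ∀ t, ω (t + 1) ∉ Acc} +
          μ s {ω : ℕ → S | ∀ i ≤ 1, ω i = x i} ≤ 1 := by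
        rw [← measure_union hdisj hcylset]
        exact prob_le_one
      rw [hSafe1, hcylval] at hle
      have h0 : (P s) s' ≤ 0 := by
        refine (ENNReal.add_le_add_iff_left (a := 1) (by simp)).mp ?_
        rw [add_zero]
        exact hle
      exact hs' (le_zero_iff.mp h0)
    -- μ {ω 0 = s} = 1
    have hstart : μ s {ω : ℕ → S | ω 0 = s} = 1 := by
      have := hcyl s 0 (fun _ => s)
      simp only [Finset.range_zero, Finset.prod_empty, mul_one, if_pos rfl] at this
      have hset : {ω : ℕ → S | ∀ i ≤ 0, ω i = s} = {ω : ℕ → S | ω 0 = s} := by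
        ext ω; simp [Nat.le_zero]
      rw [← hset]
      simpa using this
    have hstartMeas : MeasurableSet {ω : ℕ → S | ω 0 = s} := by
      have h : {ω : ℕ → S | ω 0 = s} = (fun ω : ℕ → S => ω 0) ⁻¹' {s} := rfl
      rw [h]
      exact (measurable_pi_apply 0) (measurableSet_singleton s)
    -- a.e. events
    have hae1 : ∀ᵐ ω ∂ μ s, ω ∈ {ω : ℕ → S | ∀ t, ω (t + 1) ∉ Acc} := by
      have h := measure_eq_zero_iff_ae_notMem.mp ((prob_compl_eq_zero_iff hSafe1Meas).mpr hSafe1)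
      filter_upwards [h] with ω hω
      simpa using hω
    have hae2 : ∀ᵐ ω ∂ μ s, ω ∈ {ω : ℕ → S | ω 0 = s} := by
      have h := measure_eq_zero_iff_ae_notMem.mp ((prob_compl_eq_zero_iff hstartMeas).mpr hstart)
      filter_upwards [h] with ω hω
      simpa using hω
    have hae : ∀ᵐ ω ∂ μ s, ω ∈ {ω : ℕ → S | ∀ t, ω t ∉ Acc} := by
      filter_upwards [hae1, hae2] with ω hω1 hω2
      intro t
      cases t with
      | zero =>
        have h0 : ω 0 = s := hω2
        rw [h0]; exact hsAcc
      | succ n => exact hω1 n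
    rw [← prob_compl_eq_zero_iff hSafeMeas, measure_eq_zero_iff_ae_notMem]
    filter_upwards [hae] with ω hω
    simpa using hω
  · intro hSafe
    refine le_antisymm prob_le_one ?_
    rw [← hSafe]
    refine measure_mono ?_
    intro ω hω t
    exact hω (t + 1)
end

section
/- Assume Acc is absorbing. Then there exists N₀ ∈ ℕ, independent of γ, such that for every γ ∈ (0,1) and every s ∈ S: the two inequalities r_n·μ_s(Safeᶜ) ≤ V^γ(s) and V^γ(s) < r_n·μ_s(Safeᶜ)·γ^{N₀} hold if and only if μ_s(Safe) < 1, where V^γ denotes the value function computed with discount parameter γ. -/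
open MeasureTheory Set
open scoped ENNReal Classical

variable {S : Type*}

/-!
Let `σ ≥ 1` be the first positive time at which the path is in `Acc`, and `q n s = μ_s(σ = n + 1)`.
Since `Acc` is absorbing, the return is `rn * γ ^ (σ - 1)` on `{σ < ∞}` and `0` otherwise, so
`V^γ(s) = rn * ∑ γ ^ n * q n s`, while `μ_s(Safeᶜ) = ∑ q n s`. The first identity holds because
both sides are fixed points of the Bellman operator `v ↦ ∑ s', P s s' * (R s' + Γ s' * v s')`,
which is a contraction: `V^γ` by the Markov property, the series by the recursion defining `q`.

Bernoulli's inequality gives `γ ^ n ≥ γ ^ N * (1 + (N - n) * (1 - γ))` for all `n`, hence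
`∑ γ ^ n * q n s > γ ^ N * ∑ q n s` as soon as `∑ n * q n s < N * ∑ q n s`. Such an `N` exists
for each state, hence for all of them at once, because `∑ n * q n s < ∞`: the tails
`μ_s(n < σ < ∞)` halve every `K` steps for a `K` that is uniform over the finite state space.
-/

open Filter Topology
open scoped NNReal

def cyl (n : ℕ) (x : ℕ → S) : Set (ℕ → S) := {ω | ∀ i ≤ n, ω i = x i}

def shift (ω : ℕ → S) : ℕ → S := fun n => ω (n + 1)

def consPath (a : S) (x : ℕ → S) : ℕ → S
  | 0 => a
  | n + 1 => x n

lemma mem_cyl_succ_consPath {n : ℕ} {a : S} {x ω : ℕ → S} :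
    ω ∈ cyl (n + 1) (consPath a x) ↔ ω 0 = a ∧ shift ω ∈ cyl n x := by
  refine ⟨fun h => ⟨h 0 (Nat.zero_le _), fun i hi => h (i + 1) (by omega)⟩, ?_⟩
  rintro ⟨h₀, h⟩ (_ | i) hi
  exacts [h₀, h i (by omega)]

lemma cyl_inter_cyl {n m : ℕ} {x y ω₀ : ℕ → S} (h₀ : ω₀ ∈ cyl n x ∩ cyl m y) :
    cyl n x ∩ cyl m y = cyl (max n m) ω₀ := by
  ext ω
  simp only [cyl, mem_inter_iff, mem_ofPred_eq, le_max_iff] at h₀ ⊢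
  refine ⟨fun h i hi => ?_, fun h => ⟨fun i hi => ?_, fun i hi => ?_⟩⟩
  · rcases hi with hi | hi
    · rw [h.1 i hi, h₀.1 i hi]
    · rw [h.2 i hi, h₀.2 i hi]
  · rw [h i (Or.inl hi), h₀.1 i hi]
  · rw [h i (Or.inr hi), h₀.2 i hi]

lemma isPiSystem_cyl : IsPiSystem (range fun p : ℕ × (ℕ → S) => cyl p.1 p.2) := by
  rintro _ ⟨⟨n, x⟩, rfl⟩ _ ⟨⟨m, y⟩, rfl⟩ ⟨ω₀, h₀⟩
  exact ⟨(max n m, ω₀), (cyl_inter_cyl h₀).symm⟩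

lemma PMF.sum_coe [Fintype S] (p : PMF S) : ∑ s, p s = 1 := by
  simpa [tsum_fintype] using p.tsum_coe

lemma PMF.sum_toReal [Fintype S] (p : PMF S) : ∑ s, (p s).toReal = 1 := by
  rw [← ENNReal.toReal_sum fun s _ => p.apply_ne_top s, p.sum_coe, ENNReal.toReal_one]

lemma measure_lt_one_iff_toReal_compl_pos {α : Type*} [MeasurableSpace α] {ν : Measure α}
    [IsProbabilityMeasure ν] {E : Set α} (hE : MeasurableSet E) :
    ν E < 1 ↔ 0 < (ν Eᶜ).toReal := by
  simp only [ENNReal.toReal_pos_iff, prob_compl_eq_one_sub hE, tsub_pos_iff_lt, iff_self_and]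
  exact fun _ => tsub_le_self.trans_lt ENNReal.one_lt_top

section Sequences

variable {a : ℕ → ℝ} {γ : ℝ}

lemma summable_pow_mul_of_nonneg (ha0 : ∀ n, 0 ≤ a n) (ha : Summable a) (hγ0 : 0 ≤ γ)
    (hγ1 : γ ≤ 1) : Summable fun n => γ ^ n * a n :=
  ha.of_nonneg_of_le (fun n => mul_nonneg (pow_nonneg hγ0 n) (ha0 n))
    fun n => mul_le_of_le_one_left (ha0 n) (pow_le_one₀ hγ0 hγ1)

lemma tsum_pow_mul_le_tsum (ha0 : ∀ n, 0 ≤ a n) (ha : Summable a) (hγ0 : 0 ≤ γ) (hγ1 : γ ≤ 1) :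
    ∑' n, γ ^ n * a n ≤ ∑' n, a n :=
  (summable_pow_mul_of_nonneg ha0 ha hγ0 hγ1).tsum_le_tsum
    (fun n => mul_le_of_le_one_left (ha0 n) (pow_le_one₀ hγ0 hγ1)) ha

lemma le_pow_div_mul_sum_of_add_le_mul {u : ℕ → ℝ} {K : ℕ} {c : ℝ} (hK : K ≠ 0) (hc0 : 0 ≤ c)
    (hu0 : ∀ n, 0 ≤ u n) (hu : ∀ n, u (n + K) ≤ c * u n) (n : ℕ) :
    u n ≤ c ^ (n / K) * ∑ j ∈ Finset.range K, u j := by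
  have hblock : ∀ i, ∀ j < K, u (j + i * K) ≤ c ^ i * ∑ j ∈ Finset.range K, u j := by
    intro i
    induction i with
    | zero =>
      intro j hj
      simpa using Finset.single_le_sum (fun k _ => hu0 k) (Finset.mem_range.2 hj)
    | succ i ih =>
      intro j hj
      calc u (j + (i + 1) * K) = u (j + i * K + K) := by ring_nf
        _ ≤ c * u (j + i * K) := hu _
        _ ≤ c * (c ^ i * ∑ j ∈ Finset.range K, u j) := by gcongr; exact ih j hj
        _ = c ^ (i + 1) * ∑ j ∈ Finset.range K, u j := by ring
  rw [← Nat.mod_add_div' n K]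
  simpa [Nat.add_mul_div_right _ _ (Nat.pos_of_ne_zero hK),
    Nat.div_eq_of_lt (Nat.mod_lt n (Nat.pos_of_ne_zero hK))] using
    hblock (n / K) (n % K) (Nat.mod_lt n (Nat.pos_of_ne_zero hK))

theorem summable_nat_mul_of_add_le_mul {u : ℕ → ℝ} {K : ℕ} {c : ℝ} (hK : K ≠ 0) (hc0 : 0 < c)
    (hc1 : c < 1) (hu0 : ∀ n, 0 ≤ u n) (hu : ∀ n, u (n + K) ≤ c * u n) :
    Summable fun n : ℕ => (n : ℝ) * u n := by
  set B := ∑ j ∈ Finset.range K, u j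
  have hB : 0 ≤ B := Finset.sum_nonneg fun j _ => hu0 j
  set ρ := c ^ ((K : ℝ)⁻¹)
  have hρ0 : 0 < ρ := Real.rpow_pos_of_pos hc0 _
  have hρ1 : ρ < 1 := Real.rpow_lt_one hc0.le hc1 (by positivity)
  have hρK : ρ ^ K = c := Real.rpow_inv_natCast_pow hc0.le hK
  have hbound : ∀ n, u n ≤ B / c * ρ ^ n := by
    intro n
    have hn : n ≤ K * (n / K + 1) := (Nat.lt_mul_div_succ n (Nat.pos_of_ne_zero hK)).le
    calc u n ≤ c ^ (n / K) * B := le_pow_div_mul_sum_of_add_le_mul hK hc0.le hu0 hu n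
      _ = B / c * c ^ (n / K + 1) := by field_simp; ring
      _ = B / c * ρ ^ (K * (n / K + 1)) := by rw [pow_mul, hρK]
      _ ≤ B / c * ρ ^ n :=
        mul_le_mul_of_nonneg_left (pow_le_pow_of_le_one hρ0.le hρ1.le hn) (by positivity)
  refine .of_nonneg_of_le (fun n => mul_nonneg n.cast_nonneg (hu0 n)) (fun n => ?_)
    ((summable_pow_mul_geometric_of_norm_lt_one 1
      (by rwa [Real.norm_of_nonneg hρ0.le])).mul_left (B / c))
  calc (n : ℝ) * u n ≤ n * (B / c * ρ ^ n) := by gcongr; exact hbound n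
    _ = B / c * ((n : ℝ) ^ 1 * ρ ^ n) := by ring

lemma pow_mul_one_add_le_pow (hγ0 : 0 ≤ γ) (hγ1 : γ ≤ 1) (N n : ℕ) :
    γ ^ N * (1 + ((N : ℝ) - n) * (1 - γ)) ≤ γ ^ n := by
  rcases le_total n N with h | h
  · obtain ⟨k, rfl⟩ := Nat.exists_eq_add_of_le h
    have hb := one_add_mul_le_pow (a := 1 - γ) (by linarith) k
    calc γ ^ (n + k) * (1 + (((n + k : ℕ) : ℝ) - n) * (1 - γ))
        = γ ^ n * (γ ^ k * (1 + k * (1 - γ))) := by push_cast; ring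
      _ ≤ γ ^ n * (γ ^ k * (1 + (1 - γ)) ^ k) := by gcongr
      _ = γ ^ n * (γ * (2 - γ)) ^ k := by rw [mul_pow]; ring
      _ ≤ γ ^ n * 1 := by gcongr; exact pow_le_one₀ (by nlinarith) (by nlinarith)
      _ = γ ^ n := mul_one _
  · obtain ⟨k, rfl⟩ := Nat.exists_eq_add_of_le h
    have hb := one_add_mul_le_pow (a := γ - 1) (by linarith) k
    calc γ ^ N * (1 + ((N : ℝ) - (N + k : ℕ)) * (1 - γ)) = γ ^ N * (1 + k * (γ - 1)) := by
          push_cast; ring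
      _ ≤ γ ^ N * (1 + (γ - 1)) ^ k := by gcongr
      _ = γ ^ (N + k) := by rw [pow_add]; ring_nf

lemma pow_mul_tsum_lt_tsum_pow_mul (ha0 : ∀ n, 0 ≤ a n) (ha : Summable a)
    (hna : Summable fun n : ℕ => (n : ℝ) * a n) (hγ0 : 0 < γ) (hγ1 : γ < 1) {N : ℕ}
    (hN : ∑' n : ℕ, (n : ℝ) * a n < N * ∑' n, a n) :
    γ ^ N * ∑' n, a n < ∑' n, γ ^ n * a n := by
  set c := γ ^ N * (1 - γ)
  have hc : 0 < c := mul_pos (pow_pos hγ0 N) (sub_pos.2 hγ1)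
  have hterm : ∀ n : ℕ, (γ ^ N + c * N) * a n - c * (n * a n) ≤ γ ^ n * a n := fun n =>
    calc (γ ^ N + c * N) * a n - c * (n * a n) = γ ^ N * (1 + ((N : ℝ) - n) * (1 - γ)) * a n := by
          ring
      _ ≤ γ ^ n * a n :=
          mul_le_mul_of_nonneg_right (pow_mul_one_add_le_pow hγ0.le hγ1.le N n) (ha0 n)
  have hsum := (ha.mul_left (γ ^ N + c * N)).sub (hna.mul_left c)
  calc γ ^ N * ∑' n, a n < (γ ^ N + c * N) * ∑' n, a n - c * ∑' n : ℕ, (n : ℝ) * a n := by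
        nlinarith
    _ = ∑' n : ℕ, ((γ ^ N + c * N) * a n - c * (n * a n)) := by
        rw [(ha.mul_left _).tsum_sub (hna.mul_left c), tsum_mul_left, tsum_mul_left]
    _ ≤ ∑' n, γ ^ n * a n :=
        hsum.tsum_le_tsum hterm (summable_pow_mul_of_nonneg ha0 ha hγ0.le hγ1.le)

lemma discounted_bounds_iff (ha0 : ∀ n, 0 ≤ a n) (ha : Summable a)
    (hna : Summable fun n : ℕ => (n : ℝ) * a n) {N : ℕ}
    (hN : 0 < ∑' n, a n → ∑' n : ℕ, (n : ℝ) * a n < N * ∑' n, a n) (hγ0 : 0 < γ) (hγ1 : γ < 1)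
    {r : ℝ} (hr : r < 0) :
    (r * ∑' n, a n ≤ r * ∑' n, γ ^ n * a n ∧ r * ∑' n, γ ^ n * a n < r * (∑' n, a n) * γ ^ N) ↔
      0 < ∑' n, a n := by
  have hle := tsum_pow_mul_le_tsum ha0 ha hγ0.le hγ1.le
  refine ⟨fun ⟨_, hlt⟩ => ?_, fun hpos => ⟨mul_le_mul_of_nonpos_left hle hr.le, ?_⟩⟩
  · rw [mul_assoc, mul_lt_mul_left_of_neg hr] at hlt
    by_contra hpos
    have h0 : ∑' n, a n = 0 := le_antisymm (not_lt.1 hpos) (tsum_nonneg ha0)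
    rw [h0] at hlt hle
    linarith
  · rw [mul_assoc, mul_comm (∑' n, a n)]
    exact mul_lt_mul_of_neg_left (pow_mul_tsum_lt_tsum_pow_mul ha0 ha hna hγ0 hγ1 (hN hpos)) hr

end Sequences

section PathSpace

variable [MeasurableSpace S]

lemma measurable_shift : Measurable (shift : (ℕ → S) → ℕ → S) :=
  measurable_pi_lambda _ fun n => measurable_pi_apply (n + 1)

variable [MeasurableSingletonClass S]

lemma measurableSet_cyl (n : ℕ) (x : ℕ → S) : MeasurableSet (cyl n x) := by
  simp only [cyl, ofPred_forall]
  exact MeasurableSet.iInter fun i => MeasurableSet.iInter fun _ =>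
    (measurableSet_singleton (x i)).preimage (measurable_pi_apply i)

lemma generateFrom_cyl [Countable S] :
    MeasurableSpace.generateFrom (range fun p : ℕ × (ℕ → S) => cyl p.1 p.2) =
      MeasurableSpace.pi := by
  refine le_antisymm (MeasurableSpace.generateFrom_le ?_) (iSup_le fun i => ?_)
  · rintro _ ⟨⟨n, x⟩, rfl⟩
    exact measurableSet_cyl n x
  refine measurable_iff_comap_le.1 (@measurable_to_countable' _ _ _ _ (_) _ fun a => ?_)
  -- the union below runs over uncountably many paths, but only finitely many cylinders
  have hcount : ((fun ω₀ => cyl i ω₀) '' {ω₀ : ℕ → S | ω₀ i = a}).Countable := by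
    refine (countable_range fun y : Fin (i + 1) → S =>
      {ω : ℕ → S | ∀ j : Fin (i + 1), ω j = y j}).mono ?_
    rintro _ ⟨ω₀, -, rfl⟩
    refine ⟨fun j => ω₀ j, ?_⟩
    ext ω
    simp only [cyl, mem_ofPred_eq]
    exact ⟨fun h i hi => h ⟨i, by omega⟩, fun h j => h j (by omega)⟩
  have hunion : (fun ω : ℕ → S => ω i) ⁻¹' {a} =
      ⋃₀ ((fun ω₀ => cyl i ω₀) '' {ω₀ | ω₀ i = a}) := by
    ext ω
    simp only [mem_preimage, mem_singleton_iff, mem_sUnion, mem_image, mem_ofPred_eq]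
    refine ⟨fun h => ⟨_, ⟨ω, h, rfl⟩, fun _ _ => rfl⟩, ?_⟩
    rintro ⟨_, ⟨ω₀, h₀, rfl⟩, hω⟩
    exact (hω i le_rfl).trans h₀
  rw [hunion]
  refine MeasurableSet.sUnion hcount ?_
  rintro _ ⟨ω₀, -, rfl⟩
  exact MeasurableSpace.measurableSet_generateFrom ⟨(i, ω₀), rfl⟩

end PathSpace

namespace IsPathMeasure

variable [MeasurableSpace S] {P : S → PMF S} {μ : S → Measure (ℕ → S)}

lemma measure_cyl (hμ : IsPathMeasure P μ) (s : S) (n : ℕ) (x : ℕ → S) :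
    μ s (cyl n x) = (if x 0 = s then 1 else 0) * ∏ i ∈ Finset.range n, P (x i) (x (i + 1)) :=
  hμ.2 s n x

variable [MeasurableSingletonClass S]

lemma ae_apply_zero (hμ : IsPathMeasure P μ) (s : S) : ∀ᵐ ω ∂μ s, ω 0 = s := by
  have := hμ.1 s
  have h : μ s {ω | ω 0 = s} = 1 := by simpa using hμ.2 s 0 fun _ => s
  exact ae_iff.2 ((prob_compl_eq_zero_iff
    ((measurableSet_singleton s).preimage (measurable_pi_apply 0))).2 h)

lemma measure_eq_zero_of_apply_zero (hμ : IsPathMeasure P μ) {s : S} {E : Set (ℕ → S)}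
    (h : ∀ ω, ω 0 = s → ω ∉ E) : μ s E = 0 :=
  measure_eq_zero_iff_ae_notMem.2 ((hμ.ae_apply_zero s).mono h)

lemma measure_eq_one_of_apply_zero (hμ : IsPathMeasure P μ) {s : S} {E : Set (ℕ → S)}
    (h : ∀ ω, ω 0 = s → ω ∈ E) : μ s E = 1 := by
  have := hμ.1 s
  rw [← measure_univ (μ := μ s)]
  exact measure_congr (ae_eq_univ.2 (hμ.measure_eq_zero_of_apply_zero fun ω h₀ hω => hω (h ω h₀)))

variable [Fintype S]

theorem map_shift (hμ : IsPathMeasure P μ) (s : S) :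
    (μ s).map shift = ∑ s', P s s' • μ s' := by
  have := hμ.1 s
  refine ext_of_generate_finite _ generateFrom_cyl.symm isPiSystem_cyl ?_ ?_
  · rintro _ ⟨⟨n, x⟩, rfl⟩
    have hae : shift ⁻¹' cyl n x =ᵐ[μ s] cyl (n + 1) (consPath s x) :=
      eventuallyEq_set.2 <| (hμ.ae_apply_zero s).mono fun ω h₀ => by
        simp [mem_cyl_succ_consPath, h₀]
    rw [Measure.map_apply measurable_shift (measurableSet_cyl n x), measure_congr hae,
      hμ.measure_cyl s (n + 1), Finset.prod_range_succ']
    simp [hμ.measure_cyl, consPath, mul_comm]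
  · have := hμ.1
    simp [Measure.map_apply measurable_shift MeasurableSet.univ, (P s).sum_coe]

lemma measure_preimage_shift (hμ : IsPathMeasure P μ) (s : S) {E : Set (ℕ → S)}
    (hE : MeasurableSet E) : μ s (shift ⁻¹' E) = ∑ s', P s s' * μ s' E := by
  rw [← Measure.map_apply measurable_shift hE, hμ.map_shift]
  simp

lemma integral_comp_shift (hμ : IsPathMeasure P μ) (s : S) {f : (ℕ → S) → ℝ}
    (hf : ∀ s', Integrable f (μ s')) :
    ∫ ω, f (shift ω) ∂μ s = ∑ s', (P s s').toReal * ∫ ω, f ω ∂μ s' := by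
  have hf' : ∀ s' ∈ Finset.univ, Integrable f (P s s' • μ s') :=
    fun s' _ => (hf s').smul_measure (PMF.apply_ne_top _ _)
  have hfs : Integrable f ((μ s).map shift) := by
    rw [hμ.map_shift]
    exact integrable_finsetSum_measure.2 hf'
  rw [← integral_map measurable_shift.aemeasurable hfs.aestronglyMeasurable, hμ.map_shift,
    integral_finsetSum_measure hf']
  simp [integral_smul_measure]

end IsPathMeasure

section Discounted

noncomputable def discountedReturn (r g : S → ℝ) (ω : ℕ → S) : ℝ :=
  ∑' t, r (ω (t + 1)) * ∏ k ∈ Finset.range t, g (ω (k + 1))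

noncomputable def bellman [Fintype S] (P : S → PMF S) (r g v : S → ℝ) (s : S) : ℝ :=
  ∑ s', (P s s').toReal * (r s' + g s' * v s')

variable [Fintype S] {r g : S → ℝ} {K : ℝ≥0}

lemma norm_discountedReturn_term_le (hg : ∀ s, |g s| ≤ K) (ω : ℕ → S) (t : ℕ) :
    ‖r (ω (t + 1)) * ∏ k ∈ Finset.range t, g (ω (k + 1))‖ ≤ ‖r‖ * K ^ t := by
  rw [norm_mul, norm_prod]
  refine mul_le_mul (norm_le_pi_norm r _) ?_ (by positivity) (norm_nonneg _)
  calc ∏ k ∈ Finset.range t, ‖g (ω (k + 1))‖ ≤ ∏ _k ∈ Finset.range t, (K : ℝ) :=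
        Finset.prod_le_prod (fun _ _ => norm_nonneg _) fun _ _ => hg _
    _ = K ^ t := by simp

lemma summable_discountedReturn_term (hK : K < 1) (hg : ∀ s, |g s| ≤ K) (ω : ℕ → S) :
    Summable fun t => r (ω (t + 1)) * ∏ k ∈ Finset.range t, g (ω (k + 1)) :=
  .of_norm_bounded ((summable_geometric_of_lt_one K.2 hK).mul_left ‖r‖)
    (norm_discountedReturn_term_le hg ω)

lemma norm_discountedReturn_le (hK : K < 1) (hg : ∀ s, |g s| ≤ K) (ω : ℕ → S) :
    ‖discountedReturn r g ω‖ ≤ ‖r‖ * (1 - (K : ℝ))⁻¹ :=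
  tsum_of_norm_bounded ((hasSum_geometric_of_lt_one K.2 hK).mul_left ‖r‖)
    (norm_discountedReturn_term_le hg ω)

lemma discountedReturn_eq_add_mul_shift (hK : K < 1) (hg : ∀ s, |g s| ≤ K) (ω : ℕ → S) :
    discountedReturn r g ω = r (ω 1) + g (ω 1) * discountedReturn r g (shift ω) := by
  rw [discountedReturn, (summable_discountedReturn_term hK hg ω).tsum_eq_zero_add, discountedReturn,
    ← tsum_mul_left]
  simp only [Finset.prod_range_succ', shift, Finset.range_zero, Finset.prod_empty, mul_one]
  congr 1
  exact tsum_congr fun t => by ring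

lemma measurable_discountedReturn [MeasurableSpace S] [MeasurableSingletonClass S] :
    Measurable (discountedReturn r g) :=
  Measurable.tsum fun _ => ((measurable_of_countable r).comp (measurable_pi_apply _)).mul <|
    Finset.measurable_prod _ fun _ _ => (measurable_of_countable g).comp (measurable_pi_apply _)

lemma contractingWith_bellman (P : S → PMF S) (r : S → ℝ) (hK : K < 1) (hg : ∀ s, |g s| ≤ K) :
    ContractingWith K (bellman P r g) := by
  refine ⟨hK, .of_dist_le_mul fun v w => (dist_pi_le_iff (by positivity)).2 fun s => ?_⟩
  calc dist (bellman P r g v s) (bellman P r g w s)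
      = |∑ s', (P s s').toReal * (g s' * (v s' - w s'))| := by
        rw [Real.dist_eq, bellman, bellman, ← Finset.sum_sub_distrib]
        congr 1
        exact Finset.sum_congr rfl fun _ _ => by ring
    _ ≤ ∑ s', (P s s').toReal * (K * dist v w) := by
        refine (Finset.abs_sum_le_sum_abs _ _).trans (Finset.sum_le_sum fun s' _ => ?_)
        rw [abs_mul, abs_mul, abs_of_nonneg ENNReal.toReal_nonneg, ← Real.dist_eq]
        gcongr
        exacts [hg s', dist_le_pi_dist v w s']
    _ = K * dist v w := by rw [← Finset.sum_mul, PMF.sum_toReal, one_mul]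

theorem IsPathMeasure.isFixedPt_bellman [MeasurableSpace S] [MeasurableSingletonClass S]
    {P : S → PMF S} {μ : S → Measure (ℕ → S)} (hμ : IsPathMeasure P μ) (hK : K < 1)
    (hg : ∀ s, |g s| ≤ K) :
    Function.IsFixedPt (bellman P r g) fun s => ∫ ω, discountedReturn r g ω ∂μ s := by
  have hint : ∀ s, Integrable (discountedReturn r g) (μ s) := fun s =>
    have := hμ.1 s
    .of_bound measurable_discountedReturn.aestronglyMeasurable _
      (ae_of_all _ (norm_discountedReturn_le hK hg))
  set F : (ℕ → S) → ℝ := fun ω => r (ω 0) + g (ω 0) * discountedReturn r g ω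
  have hFae : ∀ s, F =ᵐ[μ s] fun ω => r s + g s * discountedReturn r g ω := fun s =>
    (hμ.ae_apply_zero s).mono fun ω h => by simp only [F, h]
  have hFi : ∀ s, Integrable F (μ s) := fun s =>
    have := hμ.1 s
    (integrable_congr (hFae s)).2 ((integrable_const _).add ((hint s).const_mul _))
  have hF : ∀ s, ∫ ω, F ω ∂μ s = r s + g s * ∫ ω, discountedReturn r g ω ∂μ s := by
    intro s
    have := hμ.1 s
    rw [integral_congr_ae (hFae s), integral_add (integrable_const _) ((hint s).const_mul _),
      integral_const_mul]
    simp
  refine funext fun s => ?_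
  calc bellman P r g (fun s => ∫ ω, discountedReturn r g ω ∂μ s) s
      = ∫ ω, F (shift ω) ∂μ s := by
        rw [hμ.integral_comp_shift s hFi]
        simp only [bellman, hF]
    _ = ∫ ω, discountedReturn r g ω ∂μ s :=
        integral_congr_ae (ae_of_all _ fun ω => (discountedReturn_eq_add_mul_shift hK hg ω).symm)

end Discounted

section Hitting

noncomputable def killedKernel (P : S → PMF S) (Acc : Set S) (s s' : S) : ℝ :=
  if s' ∈ Acc then 0 else (P s s').toReal

variable {P : S → PMF S} {Acc : Set S}

lemma killedKernel_nonneg (s s' : S) : 0 ≤ killedKernel P Acc s s' := by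
  unfold killedKernel
  split_ifs <;> simp

lemma killedKernel_of_mem (habs : ∀ s ∈ Acc, (P s).support ⊆ Acc) {s : S} (hs : s ∈ Acc)
    (s' : S) : killedKernel P Acc s s' = 0 := by
  unfold killedKernel
  split_ifs with hs'
  · rfl
  · rw [(P s).apply_eq_zero_iff _ |>.2 fun h => hs' (habs s hs h), ENNReal.toReal_zero]

variable [Fintype S]

variable (P Acc) in
/-- The probability, from `s`, that the first time `t ≥ 1` with `ω t ∈ Acc` is `t = n + 1`
(the index is shifted by one). -/
noncomputable def firstHitProb : ℕ → S → ℝ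
  | 0, s => ∑ s', if s' ∈ Acc then (P s s').toReal else 0
  | n + 1, s => ∑ s', killedKernel P Acc s s' * firstHitProb n s'

variable (P Acc) in
noncomputable def hitProb (s : S) : ℝ := ∑' n, firstHitProb P Acc n s

lemma firstHitProb_zero_add_sum_killedKernel (s : S) :
    firstHitProb P Acc 0 s + ∑ s', killedKernel P Acc s s' = 1 := by
  rw [firstHitProb, ← Finset.sum_add_distrib, ← (P s).sum_toReal]
  exact Finset.sum_congr rfl fun s' _ => by unfold killedKernel; split_ifs <;> simp

lemma firstHitProb_nonneg (n : ℕ) (s : S) : 0 ≤ firstHitProb P Acc n s := by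
  induction n generalizing s with
  | zero => exact Finset.sum_nonneg fun _ _ => by split_ifs <;> simp
  | succ n ih => exact Finset.sum_nonneg fun _ _ => mul_nonneg (killedKernel_nonneg _ _) (ih _)

lemma firstHitProb_of_mem (habs : ∀ s ∈ Acc, (P s).support ⊆ Acc) {s : S} (hs : s ∈ Acc)
    (n : ℕ) : firstHitProb P Acc n s = if n = 0 then 1 else 0 := by
  cases n with
  | zero =>
    simpa [killedKernel_of_mem habs hs] using
      firstHitProb_zero_add_sum_killedKernel (P := P) (Acc := Acc) s
  | succ n => simp [firstHitProb, killedKernel_of_mem habs hs]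

lemma sum_range_succ_firstHitProb (n : ℕ) (s : S) :
    ∑ k ∈ Finset.range (n + 1), firstHitProb P Acc k s =
      firstHitProb P Acc 0 s +
        ∑ s', killedKernel P Acc s s' * ∑ k ∈ Finset.range n, firstHitProb P Acc k s' := by
  rw [Finset.sum_range_succ', add_comm]
  simp only [Finset.mul_sum]
  rw [Finset.sum_comm]
  rfl

lemma sum_range_firstHitProb_le_one (n : ℕ) (s : S) :
    ∑ k ∈ Finset.range n, firstHitProb P Acc k s ≤ 1 := by
  induction n generalizing s with
  | zero => simp
  | succ n ih =>
    rw [sum_range_succ_firstHitProb,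
      ← firstHitProb_zero_add_sum_killedKernel (P := P) (Acc := Acc) s]
    gcongr with s'
    exact mul_le_of_le_one_right (killedKernel_nonneg _ _) (ih s')

lemma summable_firstHitProb (s : S) : Summable fun n => firstHitProb P Acc n s :=
  summable_of_sum_range_le (fun n => firstHitProb_nonneg n s)
    fun n => sum_range_firstHitProb_le_one n s

lemma tsum_pow_mul_firstHitProb_of_mem (habs : ∀ s ∈ Acc, (P s).support ⊆ Acc) {s : S}
    (hs : s ∈ Acc) (γ : ℝ) : ∑' n, γ ^ n * firstHitProb P Acc n s = 1 := by
  rw [tsum_eq_single 0 fun n hn => by rw [firstHitProb_of_mem habs hs, if_neg hn, mul_zero],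
    firstHitProb_of_mem habs hs, if_pos rfl, pow_zero, one_mul]

lemma hitProb_of_mem (habs : ∀ s ∈ Acc, (P s).support ⊆ Acc) {s : S} (hs : s ∈ Acc) :
    hitProb P Acc s = 1 := by
  simpa [hitProb] using tsum_pow_mul_firstHitProb_of_mem habs hs 1

lemma tsum_pow_mul_firstHitProb_eq {γ : ℝ} (hγ0 : 0 ≤ γ) (hγ1 : γ ≤ 1) (s : S) :
    ∑' n, γ ^ n * firstHitProb P Acc n s =
      firstHitProb P Acc 0 s +
        γ * ∑ s', killedKernel P Acc s s' * ∑' n, γ ^ n * firstHitProb P Acc n s' := by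
  have hsum : ∀ s, Summable fun n => γ ^ n * firstHitProb P Acc n s := fun s =>
    summable_pow_mul_of_nonneg (firstHitProb_nonneg · s) (summable_firstHitProb s) hγ0 hγ1
  rw [(hsum s).tsum_eq_zero_add, pow_zero, one_mul]
  congr 1
  simp only [← tsum_mul_left]
  rw [← Summable.tsum_finsetSum fun s' _ => (hsum s').mul_left _, ← tsum_mul_left]
  refine tsum_congr fun n => ?_
  simp only [firstHitProb, pow_succ, Finset.mul_sum]
  exact Finset.sum_congr rfl fun _ _ => by ring

end Hitting

section Value

variable [Fintype S] {P : S → PMF S} {Acc : Set S}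

theorem isFixedPt_bellman_firstHitProb (habs : ∀ s ∈ Acc, (P s).support ⊆ Acc)
    {γ : ℝ} (hγ0 : 0 ≤ γ) (hγ1 : γ ≤ 1) (γacc rn : ℝ) :
    Function.IsFixedPt (bellman P (Rw Acc γacc rn) (Γw Acc γacc γ))
      fun s => rn * ∑' n, γ ^ n * firstHitProb P Acc n s := by
  refine funext fun s => ?_
  rw [tsum_pow_mul_firstHitProb_eq hγ0 hγ1, firstHitProb]
  simp only [bellman, Finset.mul_sum, mul_add, ← Finset.sum_add_distrib]
  refine Finset.sum_congr rfl fun s' _ => ?_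
  by_cases hs' : s' ∈ Acc
  · simp only [Rw, Γw, killedKernel, if_pos hs', tsum_pow_mul_firstHitProb_of_mem habs hs']
    ring
  · simp only [Rw, Γw, killedKernel, if_neg hs']
    ring

theorem IsPathMeasure.val_eq [MeasurableSpace S] [MeasurableSingletonClass S]
    {μ : S → Measure (ℕ → S)} (hμ : IsPathMeasure P μ) (habs : ∀ s ∈ Acc, (P s).support ⊆ Acc)
    {γacc γ : ℝ} (hγacc0 : 0 ≤ γacc) (hγacc1 : γacc < 1) (hγ0 : 0 ≤ γ) (hγ1 : γ < 1) (rn : ℝ)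
    (s : S) : Val Acc γacc γ rn μ s = rn * ∑' n, γ ^ n * firstHitProb P Acc n s := by
  set K : ℝ≥0 := ⟨max γacc γ, le_max_of_le_left hγacc0⟩
  have hK : K < 1 := show max γacc γ < 1 from max_lt hγacc1 hγ1
  have hg : ∀ s, |Γw Acc γacc γ s| ≤ K := fun s => by
    unfold Γw
    split_ifs
    exacts [(abs_of_nonneg hγacc0).trans_le (le_max_left _ _),
      (abs_of_nonneg hγ0).trans_le (le_max_right _ _)]
  exact congrFun ((contractingWith_bellman P _ hK hg).fixedPoint_unique'
    (hμ.isFixedPt_bellman hK hg) (isFixedPt_bellman_firstHitProb habs hγ0 hγ1.le γacc rn)) s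

end Value

section Safety

def hitBy (Acc : Set S) (n : ℕ) : Set (ℕ → S) := {ω | ∃ t ≤ n, ω t ∈ Acc}

variable {Acc : Set S}

lemma monotone_hitBy : Monotone (hitBy Acc) :=
  fun _ _ hmn _ ⟨t, ht, hω⟩ => ⟨t, ht.trans hmn, hω⟩

lemma iUnion_hitBy : ⋃ n, hitBy Acc n = {ω | ∀ t, ω t ∉ Acc}ᶜ := by
  ext ω
  simp only [hitBy, mem_iUnion, mem_ofPred_eq, mem_compl_iff, not_forall, not_not]
  exact ⟨fun ⟨_, t, _, h⟩ => ⟨t, h⟩, fun ⟨t, h⟩ => ⟨t, t, le_rfl, h⟩⟩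

lemma mem_hitBy_succ_iff {ω : ℕ → S} (h₀ : ω 0 ∉ Acc) (n : ℕ) :
    ω ∈ hitBy Acc (n + 1) ↔ shift ω ∈ hitBy Acc n := by
  refine ⟨fun ⟨t, ht, hω⟩ => ?_, fun ⟨t, ht, hω⟩ => ⟨t + 1, by omega, hω⟩⟩
  cases t with
  | zero => exact absurd hω h₀
  | succ t => exact ⟨t, by omega, hω⟩

lemma measurableSet_hitBy [MeasurableSpace S] [Countable S] [MeasurableSingletonClass S]
    (n : ℕ) : MeasurableSet (hitBy Acc n) := by
  have : hitBy Acc n = ⋃ t, ⋃ (_ : t ≤ n), (fun ω : ℕ → S => ω t) ⁻¹' Acc := by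
    ext ω
    simp [hitBy]
  rw [this]
  exact MeasurableSet.iUnion fun t => MeasurableSet.iUnion fun _ =>
    Acc.to_countable.measurableSet.preimage (measurable_pi_apply t)

lemma measurableSet_safe [MeasurableSpace S] [Countable S] [MeasurableSingletonClass S] :
    MeasurableSet {ω : ℕ → S | ∀ t, ω t ∉ Acc} := by
  rw [← compl_compl {ω : ℕ → S | ∀ t, ω t ∉ Acc}, ← iUnion_hitBy]
  exact (MeasurableSet.iUnion measurableSet_hitBy).compl

namespace IsPathMeasure

variable [Fintype S] [MeasurableSpace S] [MeasurableSingletonClass S] {P : S → PMF S}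
  {μ : S → Measure (ℕ → S)}

lemma measure_hitBy_toReal (hμ : IsPathMeasure P μ) (n : ℕ) (s : S) :
    (μ s (hitBy Acc n)).toReal =
      if s ∈ Acc then 1 else ∑ k ∈ Finset.range n, firstHitProb P Acc k s := by
  by_cases hs : s ∈ Acc
  · rw [if_pos hs, hμ.measure_eq_one_of_apply_zero (E := hitBy Acc n)
      fun ω h => ⟨0, Nat.zero_le n, h ▸ hs⟩, ENNReal.toReal_one]
  rw [if_neg hs]
  induction n generalizing s with
  | zero =>
    rw [hμ.measure_eq_zero_of_apply_zero (E := hitBy Acc 0) fun ω h ⟨t, ht, hω⟩ => hs (by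
      rwa [← h, ← Nat.le_zero.1 ht]), ENNReal.toReal_zero, Finset.sum_range_zero]
  | succ n ih =>
    have hae : hitBy Acc (n + 1) =ᵐ[μ s] shift ⁻¹' hitBy Acc n :=
      eventuallyEq_set.2 <| (hμ.ae_apply_zero s).mono fun ω h => mem_hitBy_succ_iff (h ▸ hs) n
    have := hμ.1
    rw [measure_congr hae, hμ.measure_preimage_shift s (measurableSet_hitBy n),
      ENNReal.toReal_sum fun s' _ => ENNReal.mul_ne_top (PMF.apply_ne_top _ _) (measure_ne_top _ _),
      sum_range_succ_firstHitProb, firstHitProb, ← Finset.sum_add_distrib]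
    refine Finset.sum_congr rfl fun s' _ => ?_
    rw [ENNReal.toReal_mul]
    by_cases hs' : s' ∈ Acc
    · rw [hμ.measure_eq_one_of_apply_zero (E := hitBy Acc n) fun ω h => ⟨0, Nat.zero_le n, h ▸ hs'⟩]
      simp [killedKernel, hs']
    · rw [ih s' hs']
      simp [killedKernel, hs']

end IsPathMeasure

end Safety

theorem IsPathMeasure.measure_safe_compl_toReal [Fintype S] [MeasurableSpace S]
    [MeasurableSingletonClass S] {P : S → PMF S} {Acc : Set S} {μ : S → Measure (ℕ → S)}
    (hμ : IsPathMeasure P μ) (habs : ∀ s ∈ Acc, (P s).support ⊆ Acc) (s : S) :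
    (μ s {ω | ∀ t, ω t ∉ Acc}ᶜ).toReal = hitProb P Acc s := by
  have := hμ.1 s
  have hlim : Tendsto (fun n => (μ s (hitBy Acc n)).toReal) atTop
      (𝓝 (μ s {ω | ∀ t, ω t ∉ Acc}ᶜ).toReal) := by
    rw [← iUnion_hitBy]
    exact (ENNReal.tendsto_toReal (measure_ne_top _ _)).comp
      (tendsto_measure_iUnion_atTop monotone_hitBy)
  simp only [hμ.measure_hitBy_toReal] at hlim
  by_cases hs : s ∈ Acc
  · simp only [if_pos hs] at hlim
    rw [hitProb_of_mem habs hs]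
    exact tendsto_nhds_unique hlim tendsto_const_nhds
  · simp only [if_neg hs] at hlim
    exact tendsto_nhds_unique hlim (summable_firstHitProb s).hasSum.tendsto_sum_nat

section Tails

variable [Fintype S] (P : S → PMF S) (Acc : Set S)

noncomputable def hitProbTail (n : ℕ) (s : S) : ℝ := ∑' k, firstHitProb P Acc (k + n) s

variable {P Acc}

lemma hitProbTail_nonneg (n : ℕ) (s : S) : 0 ≤ hitProbTail P Acc n s :=
  tsum_nonneg fun _ => firstHitProb_nonneg _ s

lemma firstHitProb_le_hitProbTail (n : ℕ) (s : S) :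
    firstHitProb P Acc n s ≤ hitProbTail P Acc n s := by
  simpa [hitProbTail] using ((summable_nat_add_iff n).2 (summable_firstHitProb s)).le_tsum 0
    fun _ _ => firstHitProb_nonneg _ s

lemma hitProbTail_le_hitProbTail_zero (n : ℕ) (s : S) :
    hitProbTail P Acc n s ≤ hitProbTail P Acc 0 s := by
  have := (summable_firstHitProb (P := P) (Acc := Acc) s).sum_add_tsum_nat_add n
  have := Finset.sum_nonneg fun k (_ : k ∈ Finset.range n) =>
    firstHitProb_nonneg (P := P) (Acc := Acc) k s
  simp only [hitProbTail, add_zero]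
  linarith

lemma hitProbTail_succ (n : ℕ) (s : S) :
    hitProbTail P Acc (n + 1) s = ∑ s', killedKernel P Acc s s' * hitProbTail P Acc n s' := by
  simp only [hitProbTail, ← tsum_mul_left]
  rw [← Summable.tsum_finsetSum fun s' _ =>
    ((summable_nat_add_iff n).2 (summable_firstHitProb s')).mul_left _]
  rfl

lemma exists_hitProbTail_le_half :
    ∃ K ≠ 0, ∀ s, hitProbTail P Acc K s ≤ hitProbTail P Acc 0 s / 2 := by
  have : ∀ s, ∀ᶠ K in atTop, hitProbTail P Acc K s ≤ hitProbTail P Acc 0 s / 2 := by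
    intro s
    rcases (hitProbTail_nonneg 0 s).eq_or_lt with h | h
    · refine Eventually.of_forall fun K => ?_
      have := hitProbTail_le_hitProbTail_zero (P := P) (Acc := Acc) K s
      linarith
    · exact (tendsto_sum_nat_add fun k => firstHitProb P Acc k s).eventually
        (eventually_le_nhds (half_pos h))
  obtain ⟨K, hK, hK0⟩ := ((eventually_all.2 this).and (eventually_ne_atTop 0)).exists
  exact ⟨K, hK0, hK⟩

lemma hitProbTail_add_le_half_mul {K : ℕ}
    (hK : ∀ s, hitProbTail P Acc K s ≤ hitProbTail P Acc 0 s / 2) (n : ℕ) (s : S) : hitProbTail P Acc (n + K) s ≤ 1 / 2 * hitProbTail P Acc n s := by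
  induction n generalizing s with
  | zero => simpa [div_eq_inv_mul] using hK s
  | succ n ih =>
    rw [Nat.add_right_comm, hitProbTail_succ, hitProbTail_succ, Finset.mul_sum]
    refine Finset.sum_le_sum fun s' _ => ?_
    calc killedKernel P Acc s s' * hitProbTail P Acc (n + K) s'
        ≤ killedKernel P Acc s s' * (1 / 2 * hitProbTail P Acc n s') :=
          mul_le_mul_of_nonneg_left (ih s') (killedKernel_nonneg _ _)
      _ = 1 / 2 * (killedKernel P Acc s s' * hitProbTail P Acc n s') := by ring

theorem summable_nat_mul_firstHitProb (s : S) :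
    Summable fun n : ℕ => (n : ℝ) * firstHitProb P Acc n s := by
  obtain ⟨K, hK0, hK⟩ := exists_hitProbTail_le_half (P := P) (Acc := Acc)
  refine (summable_nat_mul_of_add_le_mul hK0 one_half_pos one_half_lt_one
    (fun n => hitProbTail_nonneg n s) fun n => hitProbTail_add_le_half_mul hK n s).of_nonneg_of_le
    (fun n => mul_nonneg n.cast_nonneg (firstHitProb_nonneg n s)) fun n => ?_
  gcongr
  exact firstHitProb_le_hitProbTail n s

theorem exists_tsum_nat_mul_firstHitProb_lt :
    ∃ N : ℕ, ∀ s, 0 < hitProb P Acc s →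
      ∑' n : ℕ, (n : ℝ) * firstHitProb P Acc n s < N * hitProb P Acc s := by
  have : ∀ s, ∀ᶠ N : ℕ in atTop, 0 < hitProb P Acc s →
      ∑' n : ℕ, (n : ℝ) * firstHitProb P Acc n s < N * hitProb P Acc s := by
    intro s
    by_cases hs : 0 < hitProb P Acc s
    · exact ((tendsto_natCast_atTop_atTop.atTop_mul_const hs).eventually_gt_atTop _).mono
        fun N hN _ => hN
    · exact Eventually.of_forall fun _ h => absurd h hs
  exact (eventually_all.2 this).exists

end Tails

theorem value_bounds_iff_not_safe_ae_general
    [Fintype S] [MeasurableSpace S] [MeasurableSingletonClass S]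
    (P : S → PMF S) (Acc : Set S) (μ : S → Measure (ℕ → S))
    (hμ : IsPathMeasure P μ)
    (habs : ∀ s ∈ Acc, (P s).support ⊆ Acc)
    (rn γacc : ℝ) (hrn : rn < 0) (hγacc : 0 < γacc ∧ γacc < 1) :
    ∃ N₀ : ℕ, ∀ γ : ℝ, 0 < γ → γ < 1 → ∀ s : S,
      ((rn * (μ s {ω | ∀ t, ω t ∉ Acc}ᶜ).toReal ≤ Val Acc γacc γ rn μ s ∧
          Val Acc γacc γ rn μ s < rn * (μ s {ω | ∀ t, ω t ∉ Acc}ᶜ).toReal * γ ^ N₀)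
        ↔ μ s {ω | ∀ t, ω t ∉ Acc} < 1) := by
  obtain ⟨N₀, hN₀⟩ := exists_tsum_nat_mul_firstHitProb_lt (P := P) (Acc := Acc)
  refine ⟨N₀, fun γ hγ0 hγ1 s => ?_⟩
  have := hμ.1 s
  rw [measure_lt_one_iff_toReal_compl_pos measurableSet_safe, hμ.measure_safe_compl_toReal habs,
    hμ.val_eq habs hγacc.1.le hγacc.2 hγ0.le hγ1]
  exact discounted_bounds_iff (fun n => firstHitProb_nonneg n s) (summable_firstHitProb s)
    (summable_nat_mul_firstHitProb s) (hN₀ s) hγ0 hγ1 hrn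

/-- there is an `N₀`, independent of `γ`, such that for every `γ ∈ (0,1)`
and every state `s`, the bounds `rn * μ_s(Safeᶜ) ≤ V^γ(s)` and
`V^γ(s) < rn * μ_s(Safeᶜ) * γ ^ N₀` hold iff `μ_s(Safe) < 1`. -/
theorem value_bounds_iff_not_safe_ae
    [Fintype S] [Nonempty S] [MeasurableSpace S] [MeasurableSingletonClass S]
    (P : S → PMF S) (Acc : Set S) (μ : S → Measure (ℕ → S))
    (hμ : IsPathMeasure P μ)
    (habs : ∀ s ∈ Acc, (P s).support ⊆ Acc)
    (rn γacc : ℝ) (hrn : rn < 0) (hγacc : 0 < γacc ∧ γacc < 1) :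
    ∃ N₀ : ℕ, ∀ γ : ℝ, 0 < γ → γ < 1 → ∀ s : S,
      ((rn * (μ s {ω | ∀ t, ω t ∉ Acc}ᶜ).toReal ≤ Val Acc γacc γ rn μ s ∧
          Val Acc γacc γ rn μ s < rn * (μ s {ω | ∀ t, ω t ∉ Acc}ᶜ).toReal * γ ^ N₀)
        ↔ μ s {ω | ∀ t, ω t ∉ Acc} < 1) :=
  value_bounds_iff_not_safe_ae_general P Acc μ hμ habs rn γacc hrn hγacc
end

section
/- Fix γ_acc ∈ (0,1) and r_n < 0. For every ε > 0 there exists γ' ∈ (0,1) such that for every γ ∈ (γ', 1), every state s ∈ S, and every policy π: 0 ≤ V^γ_π(s) − r_n·μ^π_s(Safeᶜ) < ε, where V^γ_π denotes the value of π computed with discount parameter γ (the measure μ^π_s does not depend on γ). -/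
open MeasureTheory Set
open scoped ENNReal Classical

variable {S : Type*}

variable {A : S → Type*}

noncomputable def Valp [MeasurableSpace S] (Acc : Set S) (γacc γ rn : ℝ)
    (μ : ((s : S) → A s) → S → Measure (ℕ → S)) (π : (s : S) → A s) (s : S) : ℝ :=
  ∫ ω, Ret Acc γacc γ rn ω ∂ (μ π s)

noncomputable def Qp [MeasurableSpace S] [Fintype S]
    (P : (s : S) → A s → PMF S) (Acc : Set S) (γacc γ rn : ℝ)
    (μ : ((s : S) → A s) → S → Measure (ℕ → S)) (π : (s : S) → A s) (s : S) (a : A s) : ℝ :=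
  ∑ s' : S, (P s a s').toReal *
    (Rw Acc γacc rn s' + Γw Acc γacc γ s' * Valp Acc γacc γ rn μ π s')

noncomputable def Qstar [MeasurableSpace S] [Fintype S]
    (P : (s : S) → A s → PMF S) (Acc : Set S) (γacc γ rn : ℝ)
    (μ : ((s : S) → A s) → S → Measure (ℕ → S)) (s : S) (a : A s) : ℝ :=
  ⨆ π : (s' : S) → A s', Qp P Acc γacc γ rn μ π s a

def WinRegion [MeasurableSpace S] (Acc : Set S)
    (μ : ((s : S) → A s) → S → Measure (ℕ → S)) : Set S :=
  {s | ∃ π : (s' : S) → A s', μ π s {ω | ∀ t, ω t ∉ Acc} = 1}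

def IsOptimal [MeasurableSpace S] (Acc : Set S) (γacc γ rn : ℝ)
    (μ : ((s : S) → A s) → S → Measure (ℕ → S)) (πo : (s : S) → A s) : Prop :=
  ∀ s, Valp Acc γacc γ rn μ πo s = ⨆ π : (s' : S) → A s', Valp Acc γacc γ rn μ π s


/-!
Because `Acc` is absorbing, almost every path that meets `Acc` stays there from its first positive
hitting time `T + 1` on; its return is then exactly `rn * γ ^ T`, while a safe path has return `0`.
So `V - rn * P(unsafe) = E[-rn * (1 - γ ^ T); unsafe]`, which is nonnegative and at most
`-rn * (1 - γ ^ N) + -rn * P(the path hits Acc, but only after time N)`. The last probability tends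
to `0` as `N → ∞`, uniformly over the finitely many policies and states, and then `γ` close to `1`
makes the first term small.
-/

open Filter Topology

noncomputable def retTerm (Acc : Set S) (γacc γ rn : ℝ) (ω : ℕ → S) (t : ℕ) : ℝ :=
  Rw Acc γacc rn (ω (t + 1)) * ∏ k ∈ Finset.range t, Γw Acc γacc γ (ω (k + 1))

def hitsOnlyAfter (Acc : Set S) (N : ℕ) : Set (ℕ → S) :=
  {ω | ∀ t, ω t ∉ Acc}ᶜ ∩ {ω | ∀ t ≤ N, ω t ∉ Acc}

section Return

variable {Acc : Set S} {γacc γ rn : ℝ} {ω : ℕ → S}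

lemma hasSum_retTerm_of_forall_notMem (h : ∀ t, ω (t + 1) ∉ Acc) :
    HasSum (retTerm Acc γacc γ rn ω) 0 := by
  convert hasSum_zero with t
  simp [retTerm, Rw, h]

lemma hasSum_retTerm_of_first_hit (h0 : 0 ≤ γacc) (h1 : γacc < 1) {T : ℕ}
    (hbefore : ∀ t < T, ω (t + 1) ∉ Acc) (hafter : ∀ t, T ≤ t → ω (t + 1) ∈ Acc) :
    HasSum (retTerm Acc γacc γ rn ω) (rn * γ ^ T) := by
  have hzero : ∀ t ∈ Finset.range T, retTerm Acc γacc γ rn ω t = 0 := fun t ht => by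
    simp [retTerm, Rw, hbefore t (Finset.mem_range.1 ht)]
  have htail : ∀ i, retTerm Acc γacc γ rn ω (i + T) = (1 - γacc) * rn * γ ^ T * γacc ^ i := by
    intro i
    have hγ : ∏ k ∈ Finset.range T, Γw Acc γacc γ (ω (k + 1)) = γ ^ T := by
      rw [Finset.prod_congr rfl fun k hk => by rw [Γw, if_neg (hbefore k (Finset.mem_range.1 hk))],
        Finset.prod_const, Finset.card_range]
    have hγacc : ∏ k ∈ Finset.range i, Γw Acc γacc γ (ω (T + k + 1)) = γacc ^ i := by
      rw [Finset.prod_congr rfl fun k _ => by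
          rw [Γw, if_pos (hafter (T + k) (Nat.le_add_right T k))],
        Finset.prod_const, Finset.card_range]
    rw [retTerm, Rw, if_pos (hafter _ (Nat.le_add_left T i)), add_comm i T, Finset.prod_range_add,
      hγ, hγacc]
    ring
  rw [← hasSum_nat_add_iff' T, Finset.sum_eq_zero hzero, sub_zero]
  simp only [htail]
  have hne : 1 - γacc ≠ 0 := sub_ne_zero.2 h1.ne'
  have hgeom := (hasSum_geometric_of_lt_one h0 h1).mul_left ((1 - γacc) * rn * γ ^ T)
  rwa [show (1 - γacc) * rn * γ ^ T * (1 - γacc)⁻¹ = rn * γ ^ T by field_simp] at hgeom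

lemma mem_of_absorbing (habs : ∀ k, ω k ∈ Acc → ω (k + 1) ∈ Acc) {a b : ℕ} (hab : a ≤ b)
    (ha : ω a ∈ Acc) : ω b ∈ Acc := by
  induction b, hab using Nat.le_induction with
  | base => exact ha
  | succ n _ ih => exact habs n ih

lemma exists_hasSum_retTerm_of_absorbing (habs : ∀ k, ω k ∈ Acc → ω (k + 1) ∈ Acc)
    (h0 : 0 ≤ γacc) (h1 : γacc < 1) :
    ∃ T : ℕ, HasSum (retTerm Acc γacc γ rn ω)
        ({ω | ∀ t, ω t ∉ Acc}ᶜ.indicator (fun _ => rn * γ ^ T) ω) ∧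
      ∀ t, ω t ∈ Acc → T ≤ t := by
  by_cases hsafe : ∀ t, ω t ∉ Acc
  · refine ⟨0, ?_, fun t ht => absurd ht (hsafe t)⟩
    rw [indicator_of_notMem (by simpa using hsafe)]
    exact hasSum_retTerm_of_forall_notMem fun t => hsafe (t + 1)
  · push Not at hsafe
    obtain ⟨t₀, ht₀⟩ := hsafe
    have hhit : ∃ t, ω (t + 1) ∈ Acc := ⟨t₀, habs t₀ ht₀⟩
    refine ⟨Nat.find hhit, ?_, fun t ht => Nat.find_min' hhit (habs t ht)⟩
    rw [indicator_of_mem fun h => h t₀ ht₀]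
    exact hasSum_retTerm_of_first_hit h0 h1 (fun t ht => Nat.find_min hhit ht)
      fun t ht => mem_of_absorbing habs (Nat.succ_le_succ ht) (Nat.find_spec hhit)

lemma ret_bounds_of_absorbing (habs : ∀ k, ω k ∈ Acc → ω (k + 1) ∈ Acc) (h0 : 0 ≤ γacc)
    (h1 : γacc < 1) (hrn : rn ≤ 0) (hγ0 : 0 ≤ γ) (hγ1 : γ ≤ 1) (N : ℕ) :
    HasSum (retTerm Acc γacc γ rn ω) (Ret Acc γacc γ rn ω) ∧ |Ret Acc γacc γ rn ω| ≤ -rn ∧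
      0 ≤ Ret Acc γacc γ rn ω - {ω | ∀ t, ω t ∉ Acc}ᶜ.indicator (fun _ => rn) ω ∧
      Ret Acc γacc γ rn ω - {ω | ∀ t, ω t ∉ Acc}ᶜ.indicator (fun _ => rn) ω ≤
        -rn * (1 - γ ^ N) + (hitsOnlyAfter Acc N).indicator (fun _ => -rn) ω := by
  obtain ⟨T, hsum, hT⟩ := exists_hasSum_retTerm_of_absorbing (γ := γ) (rn := rn) habs h0 h1
  refine ⟨hsum.summable.hasSum, ?_⟩
  rw [show Ret Acc γacc γ rn ω = _ from hsum.tsum_eq]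
  have hγT : γ ^ T ≤ 1 := pow_le_one₀ hγ0 hγ1
  have hγN : γ ^ N ≤ 1 := pow_le_one₀ hγ0 hγ1
  have hγT0 : 0 ≤ γ ^ T := pow_nonneg hγ0 T
  by_cases hunsafe : ω ∈ {ω | ∀ t, ω t ∉ Acc}ᶜ
  · simp only [indicator_of_mem hunsafe]
    refine ⟨by rw [abs_le]; constructor <;> nlinarith, by nlinarith, ?_⟩
    by_cases hlate : ω ∈ hitsOnlyAfter Acc N
    · rw [indicator_of_mem hlate]
      nlinarith
    · have hTN : T ≤ N := by
        obtain ⟨t, htN, ht⟩ : ∃ t ≤ N, ω t ∈ Acc := by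
          simpa [hitsOnlyAfter, hunsafe] using hlate
        exact (hT t ht).trans htN
      have hγNT : γ ^ N ≤ γ ^ T := pow_le_pow_of_le_one hγ0 hγ1 hTN
      rw [indicator_of_notMem hlate]
      nlinarith
  · have hlate : ω ∉ hitsOnlyAfter Acc N := fun h => hunsafe h.1
    simp only [indicator_of_notMem hunsafe, indicator_of_notMem hlate]
    refine ⟨by simpa using hrn, by simp, by nlinarith⟩

end Return

section PathMeasure

variable [MeasurableSpace S] {Acc : Set S}

lemma measure_eq_zero_of_forall_cylinder_null [Countable S] (μ : Measure (ℕ → S)) (n : ℕ)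
    {B : Set (ℕ → S)} (h : ∀ ω ∈ B, μ {ω' | ∀ i ≤ n, ω' i = ω i} = 0) : μ B = 0 := by
  have hcover : B ⊆ ⋃ v : Fin (n + 1) → S, B ∩ {ω | ∀ i : Fin (n + 1), ω i = v i} :=
    fun ω hω => mem_iUnion.2 ⟨fun i => ω i, hω, fun _ => rfl⟩
  refine measure_mono_null hcover (measure_iUnion_null fun v => ?_)
  rcases (B ∩ {ω | ∀ i : Fin (n + 1), ω i = v i}).eq_empty_or_nonempty with hempty | ⟨ω₀, hω₀, hω₀v⟩
  · simp [hempty]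
  · refine measure_mono_null (?_ : _ ⊆ {ω | ∀ i ≤ n, ω i = ω₀ i}) (h ω₀ hω₀)
    intro ω hω i hi
    rw [hω.2 ⟨i, Nat.lt_succ_of_le hi⟩, hω₀v ⟨i, Nat.lt_succ_of_le hi⟩]

lemma IsPathMeasure.ae_absorbing [Countable S] {P : S → PMF S} {μ : S → Measure (ℕ → S)}
    (hμ : IsPathMeasure P μ) (habs : ∀ s ∈ Acc, (P s).support ⊆ Acc) (s : S) :
    ∀ᵐ ω ∂μ s, ∀ k, ω k ∈ Acc → ω (k + 1) ∈ Acc := by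
  refine ae_all_iff.2 fun k => ae_iff.2 ?_
  refine measure_eq_zero_of_forall_cylinder_null _ (k + 1) fun ω hω => ?_
  push Not at hω
  have hstep : P (ω k) (ω (k + 1)) = 0 :=
    PMF.apply_eq_zero_iff _ _ |>.2 fun h => hω.2 (habs _ hω.1 h)
  rw [hμ.2 s (k + 1) ω, Finset.prod_eq_zero (Finset.mem_range.2 (Nat.lt_succ_self k)) hstep,
    mul_zero]

variable [MeasurableSingletonClass S] [Countable S]

lemma measurable_retTerm (γacc γ rn : ℝ) (t : ℕ) :
    Measurable fun ω : ℕ → S => retTerm Acc γacc γ rn ω t := by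
  unfold retTerm
  exact ((measurable_of_countable (Rw Acc γacc rn)).comp (measurable_pi_apply _)).mul <|
    Finset.measurable_prod _ fun _ _ =>
      (measurable_of_countable (Γw Acc γacc γ)).comp (measurable_pi_apply _)

lemma measurableSet_unsafe : MeasurableSet {ω : ℕ → S | ∀ t, ω t ∉ Acc}ᶜ := by
  measurability

lemma measurableSet_hitsOnlyAfter (N : ℕ) : MeasurableSet (hitsOnlyAfter Acc N) := by
  unfold hitsOnlyAfter
  measurability

lemma tendsto_measure_hitsOnlyAfter (ν : Measure (ℕ → S)) [IsFiniteMeasure ν] :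
    Tendsto (fun N => ν (hitsOnlyAfter Acc N)) atTop (𝓝 0) := by
  have hanti : Antitone (hitsOnlyAfter Acc) := fun M N hMN ω hω =>
    ⟨hω.1, fun t ht => hω.2 t (ht.trans hMN)⟩
  have hempty : ⋂ N, hitsOnlyAfter Acc N = ∅ := by
    refine eq_empty_of_forall_notMem fun ω hω => ?_
    obtain ⟨t, ht⟩ : ∃ t, ω t ∈ Acc := by simpa using (mem_iInter.1 hω 0).1
    exact (mem_iInter.1 hω t).2 t le_rfl ht
  have := tendsto_measure_iInter_atTop
    (fun N => (measurableSet_hitsOnlyAfter N).nullMeasurableSet) hanti ⟨0, measure_ne_top ν _⟩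
  rwa [hempty, measure_empty] at this

lemma IsPathMeasure.val_sub_mem_Icc {P : S → PMF S} {μ : S → Measure (ℕ → S)}
    (hμ : IsPathMeasure P μ) (habs : ∀ s ∈ Acc, (P s).support ⊆ Acc) {γacc γ rn : ℝ}
    (h0 : 0 ≤ γacc) (h1 : γacc < 1) (hrn : rn ≤ 0) (hγ0 : 0 ≤ γ) (hγ1 : γ ≤ 1) (N : ℕ) (s : S) :
    Val Acc γacc γ rn μ s - rn * (μ s {ω | ∀ t, ω t ∉ Acc}ᶜ).toReal ∈
      Icc 0 (-rn * (1 - γ ^ N) + -rn * (μ s (hitsOnlyAfter Acc N)).toReal) := by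
  have := hμ.1 s
  have hbd := (hμ.ae_absorbing habs s).mono fun ω hω =>
    ret_bounds_of_absorbing hω h0 h1 hrn hγ0 hγ1 N
  have hmeas : AEStronglyMeasurable (Ret Acc γacc γ rn) (μ s) :=
    (aemeasurable_of_tendsto_metrizable_ae' (fun n => (Finset.measurable_sum _ fun t _ =>
      measurable_retTerm γacc γ rn t).aemeasurable)
      (hbd.mono fun ω h => h.1.tendsto_sum_nat)).aestronglyMeasurable
  have hRet : Integrable (Ret Acc γacc γ rn) (μ s) :=
    (integrable_const (-rn)).mono' hmeas (hbd.mono fun ω h => h.2.1)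
  have hind : Integrable ({ω | ∀ t, ω t ∉ Acc}ᶜ.indicator fun _ => rn) (μ s) :=
    (integrable_const rn).indicator measurableSet_unsafe
  have hlate : Integrable ((hitsOnlyAfter Acc N).indicator fun _ => -rn) (μ s) :=
    (integrable_const (-rn)).indicator (measurableSet_hitsOnlyAfter N)
  have hgap : Val Acc γacc γ rn μ s - rn * (μ s {ω | ∀ t, ω t ∉ Acc}ᶜ).toReal =
      ∫ ω, Ret Acc γacc γ rn ω - {ω | ∀ t, ω t ∉ Acc}ᶜ.indicator (fun _ => rn) ω ∂μ s := by
    rw [integral_sub hRet hind, integral_indicator_const _ measurableSet_unsafe, smul_eq_mul,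
      measureReal_def, mul_comm]
    rfl
  have hbound : ∫ ω, -rn * (1 - γ ^ N) + (hitsOnlyAfter Acc N).indicator (fun _ => -rn) ω ∂μ s =
      -rn * (1 - γ ^ N) + -rn * (μ s (hitsOnlyAfter Acc N)).toReal := by
    rw [integral_add (integrable_const _) hlate, integral_const,
      integral_indicator_const _ (measurableSet_hitsOnlyAfter N), probReal_univ, one_smul,
      smul_eq_mul, measureReal_def]
    ring
  rw [hgap]
  exact ⟨integral_nonneg_of_ae (hbd.mono fun ω h => h.2.2.1),
    (integral_mono_ae (hRet.sub hind) ((integrable_const _).add hlate)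
      (hbd.mono fun ω h => h.2.2.2)).trans_eq hbound⟩

end PathMeasure

lemma exists_forall_Ioo_of_eventually_nhdsLT_one {p : ℝ → Prop} (h : ∀ᶠ γ in 𝓝[<] 1, p γ) :
    ∃ γ' : ℝ, 0 < γ' ∧ γ' < 1 ∧ ∀ γ, γ' < γ → γ < 1 → p γ := by
  obtain ⟨l, hl, hsub⟩ := mem_nhdsLT_iff_exists_Ioo_subset.1 h
  exact ⟨max l (1 / 2), by positivity, max_lt hl (by norm_num),
    fun γ hγ' hγ1 => hsub ⟨(le_max_left _ _).trans_lt hγ', hγ1⟩⟩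

theorem value_close_to_rn_mul_unsafe_prob_general
    [Fintype S] [MeasurableSpace S] [MeasurableSingletonClass S]
    [∀ s, Fintype (A s)]
    (P : (s : S) → A s → PMF S) (Acc : Set S)
    (habs : ∀ s ∈ Acc, ∀ a : A s, (P s a).support ⊆ Acc)
    (μ : ((s : S) → A s) → S → Measure (ℕ → S))
    (hμ : ∀ π : (s : S) → A s, IsPathMeasure (fun s => P s (π s)) (μ π))
    (rn γacc : ℝ) (hrn : rn < 0) (hγacc : 0 < γacc ∧ γacc < 1) :
    ∀ ε : ℝ, 0 < ε → ∃ γ' : ℝ, 0 < γ' ∧ γ' < 1 ∧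
      ∀ γ : ℝ, γ' < γ → γ < 1 → ∀ (s : S) (π : (s : S) → A s),
        0 ≤ Valp Acc γacc γ rn μ π s -
            rn * (μ π s {ω | ∀ t, ω t ∉ Acc}ᶜ).toReal ∧
          Valp Acc γacc γ rn μ π s -
            rn * (μ π s {ω | ∀ t, ω t ∉ Acc}ᶜ).toReal < ε := by
  intro ε hε
  obtain ⟨N, hN⟩ : ∃ N : ℕ, ∀ (π : (s : S) → A s) (s : S),
      -rn * (μ π s (hitsOnlyAfter Acc N)).toReal < ε / 2 := by
    refine Eventually.exists (f := atTop)
      (eventually_all.2 fun π => eventually_all.2 fun s => ?_)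
    have := (hμ π).1 s
    have := ((ENNReal.tendsto_toReal ENNReal.zero_ne_top).comp
      (tendsto_measure_hitsOnlyAfter (Acc := Acc) (μ π s))).const_mul (-rn)
    simp only [ENNReal.toReal_zero, mul_zero] at this
    exact this.eventually (gt_mem_nhds (half_pos hε))
  have hγN : ∀ᶠ γ in 𝓝[<] 1, 0 ≤ γ ∧ -rn * (1 - γ ^ N) < ε / 2 := by
    have hcont : Tendsto (fun γ : ℝ => -rn * (1 - γ ^ N)) (𝓝 1) (𝓝 0) :=
      (continuous_const.mul (continuous_const.sub (continuous_pow N))).tendsto' 1 0 (by simp)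
    exact nhdsWithin_le_nhds <| ((lt_mem_nhds one_pos).mono fun _ => le_of_lt).and
      (hcont.eventually (gt_mem_nhds (half_pos hε)))
  obtain ⟨γ', hγ'0, hγ'1, hγ'⟩ := exists_forall_Ioo_of_eventually_nhdsLT_one hγN
  refine ⟨γ', hγ'0, hγ'1, fun γ hγ hγ1 s π => ?_⟩
  obtain ⟨hγ0, hγε⟩ := hγ' γ hγ hγ1
  obtain ⟨hlow, hup⟩ := (hμ π).val_sub_mem_Icc (fun s hs => habs s hs (π s)) hγacc.1.le hγacc.2
    hrn.le hγ0 hγ1.le N s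
  exact ⟨hlow, hup.trans_lt (by linarith [hN π s])⟩

/-- for every `ε > 0` there is a threshold `γ' ∈ (0,1)` such that for all
discount factors `γ ∈ (γ', 1)`, all states and all policies,
`0 ≤ V^γ_π(s) - rn * μ^π_s(Safeᶜ) < ε`. -/
theorem value_close_to_rn_mul_unsafe_prob
    [Fintype S] [Nonempty S] [MeasurableSpace S] [MeasurableSingletonClass S]
    [∀ s, Fintype (A s)] [∀ s, Nonempty (A s)]
    (P : (s : S) → A s → PMF S) (Acc : Set S)
    (habs : ∀ s ∈ Acc, ∀ a : A s, (P s a).support ⊆ Acc)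
    (μ : ((s : S) → A s) → S → Measure (ℕ → S))
    (hμ : ∀ π : (s : S) → A s, IsPathMeasure (fun s => P s (π s)) (μ π))
    (rn γacc : ℝ) (hrn : rn < 0) (hγacc : 0 < γacc ∧ γacc < 1) :
    ∀ ε : ℝ, 0 < ε → ∃ γ' : ℝ, 0 < γ' ∧ γ' < 1 ∧
      ∀ γ : ℝ, γ' < γ → γ < 1 → ∀ (s : S) (π : (s : S) → A s),
        0 ≤ Valp Acc γacc γ rn μ π s -
            rn * (μ π s {ω | ∀ t, ω t ∉ Acc}ᶜ).toReal ∧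
          Valp Acc γacc γ rn μ π s -
            rn * (μ π s {ω | ∀ t, ω t ∉ Acc}ᶜ).toReal < ε :=
  value_close_to_rn_mul_unsafe_prob_general P Acc habs μ hμ rn γacc hrn hγacc
end

section
/- Assume Acc is absorbing, and let U = {s' ∈ S : μ_{s'}(Safe) = 1}. Then for every s ∈ S: μ_s({ω : ∀ t, ω t ∉ Acc ∪ U}) = 0; equivalently, almost every path of the chain eventually enters Acc or enters the set of states from which the chain is almost surely safe. -/
open MeasureTheory Set
open scoped ENNReal Classical

variable {S : Type*}

/-! From a state outside `Acc ∪ U` the chain avoids `Acc` forever with probability `< 1`, so it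
enters `Acc` within some finite horizon with positive probability. As `S` is finite, one horizon `N`
and one bound `c < 1` on the probability of avoiding `Acc ∪ U` for `N` steps serve all states
(inside `Acc ∪ U` that probability is `0`). Restarting the chain every `N` steps (Markov property)
bounds the probability of avoiding `Acc ∪ U` for `k * N` steps by `c ^ k → 0`. -/

open Filter Topology

namespace MarkovChain

def avoidUntil (B : Set S) (n : ℕ) : Set (ℕ → S) := {ω | ∀ i ≤ n, ω i ∉ B}

lemma antitone_avoidUntil (B : Set S) : Antitone (avoidUntil B) :=
  fun _ _ hmn _ hω i hi => hω i (hi.trans hmn)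

lemma avoidUntil_subset_avoidUntil {B C : Set S} (h : B ⊆ C) (n : ℕ) :
    avoidUntil C n ⊆ avoidUntil B n :=
  fun _ hω i hi hB => hω i hi (h hB)

lemma iInter_avoidUntil (B : Set S) : ⋂ n, avoidUntil B n = {ω | ∀ t, ω t ∉ B} := by
  ext ω
  simp only [avoidUntil, Set.mem_iInter, Set.mem_ofPred_eq]
  exact ⟨fun h t => h t t le_rfl, fun h _ i _ => h i⟩

lemma setOf_forall_notMem_subset_avoidUntil (B : Set S) (n : ℕ) :
    {ω : ℕ → S | ∀ t, ω t ∉ B} ⊆ avoidUntil B n :=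
  fun _ hω i _ => hω i

def pathPrefix (n : ℕ) (ω : ℕ → S) : Fin (n + 1) → S := fun i => ω i

noncomputable def prefixWeight (P : S → PMF S) (s : S) {n : ℕ} (x : Fin (n + 1) → S) : ℝ≥0∞ :=
  (if x 0 = s then 1 else 0) * ∏ i : Fin n, P (x i.castSucc) (x i.succ)

lemma prefixWeight_cons (P : S → PMF S) (s a : S) {n : ℕ} (y : Fin (n + 1) → S) :
    prefixWeight P s (Fin.cons a y : Fin (n + 2) → S) =
      (if a = s then 1 else 0) * (P s (y 0) * prefixWeight P (y 0) y) := by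
  unfold prefixWeight
  simp only [Fin.prod_univ_succ, Fin.cons_zero, Fin.castSucc_zero, Fin.cons_succ,
    ← Fin.succ_castSucc]
  split_ifs <;> simp_all

lemma sum_fun_fin_succ_eq_sum_cons [Fintype S] {M : Type*} [AddCommMonoid M] {n : ℕ}
    (f : (Fin (n + 1) → S) → M) :
    ∑ x, f x = ∑ y : Fin n → S, ∑ a, f (Fin.cons a y) := by
  rw [← (Fin.consEquiv fun _ => S).sum_comp, Fintype.sum_prod_type, Finset.sum_comm]
  rfl

lemma sum_mul_prefixWeight [Fintype S] (P : S → PMF S) (s : S) {n : ℕ} (y : Fin (n + 1) → S) :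
    ∑ a, P s a * prefixWeight P a y = P s (y 0) * prefixWeight P (y 0) y := by
  simp only [prefixWeight, ← mul_assoc, mul_ite, mul_one, mul_zero, ite_mul, zero_mul,
    eq_comm (a := y 0), Finset.sum_ite_eq', Finset.mem_univ, if_true]

lemma sum_cons_avoid_prefixWeight [Fintype S] (P : S → PMF S) (B : Set S) (s : S) {n : ℕ}
    (y : Fin (n + 1) → S) :
    ∑ a, (if ∀ i, (Fin.cons a y : Fin (n + 2) → S) i ∉ B then
      prefixWeight P s (Fin.cons a y : Fin (n + 2) → S) else 0) =
      (if s ∈ B then 0 else 1) * if ∀ i, y i ∉ B then ∑ a, P s a * prefixWeight P a y else 0 := by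
  rw [Finset.sum_eq_single s (fun a _ has => by simp [prefixWeight_cons, has])
    (by simp), sum_mul_prefixWeight]
  by_cases hs : s ∈ B <;> simp [Fin.forall_fin_succ, prefixWeight_cons, hs]

section Measurable

variable [MeasurableSpace S]

lemma measurableSet_avoidUntil {B : Set S} (hB : MeasurableSet B) (n : ℕ) :
    MeasurableSet (avoidUntil B n) := by
  simp only [avoidUntil, Set.ofPred_forall]
  exact .iInter fun i => .iInter fun _ => hB.compl.preimage (measurable_pi_apply i)

lemma tendsto_measure_avoidUntil (ν : Measure (ℕ → S)) [IsFiniteMeasure ν] {B : Set S}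
    (hB : MeasurableSet B) :
    Tendsto (fun n => ν (avoidUntil B n)) atTop (𝓝 (ν {ω | ∀ t, ω t ∉ B})) := by
  rw [← iInter_avoidUntil]
  exact tendsto_measure_iInter_atTop
    (fun n => (measurableSet_avoidUntil hB n).nullMeasurableSet) (antitone_avoidUntil B)
    ⟨0, measure_ne_top _ _⟩

lemma measurable_pathPrefix (n : ℕ) : Measurable (pathPrefix (S := S) n) :=
  measurable_pi_lambda _ fun i => measurable_pi_apply (i : ℕ)

lemma measure_pathPrefix_preimage {P : S → PMF S} {μ : S → Measure (ℕ → S)}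
    (hμ : IsPathMeasure P μ) (s : S) {n : ℕ} (x : Fin (n + 1) → S) :
    μ s (pathPrefix n ⁻¹' {x}) = prefixWeight P s x := by
  have hclamp (i : ℕ) (hi : i ≤ n) : Fin.clamp i n = ⟨i, by omega⟩ :=
    Fin.ext (min_eq_left hi)
  have hset : pathPrefix n ⁻¹' {x} = {ω | ∀ i ≤ n, ω i = x (Fin.clamp i n)} := by
    ext ω
    simp only [Set.mem_preimage, Set.mem_singleton_iff, Set.mem_ofPred_eq, funext_iff,
      Fin.forall_iff, pathPrefix]
    exact forall_congr' fun i => ⟨fun h hi => by rw [hclamp i hi]; exact h (by omega),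
      fun h hi => by rw [h (by omega), hclamp i (by omega)]⟩
  rw [hset, hμ.2, prefixWeight, ← Fin.prod_univ_eq_prod_range]
  congr 1
  refine Finset.prod_congr rfl fun i _ => ?_
  rw [hclamp i i.isLt.le, hclamp (i + 1) i.isLt]
  rfl

end Measurable

section PathMeasure

variable [Fintype S] [MeasurableSpace S] [MeasurableSingletonClass S] {P : S → PMF S}
  {μ : S → Measure (ℕ → S)}

lemma measure_avoidUntil_eq_sum (hμ : IsPathMeasure P μ) (B : Set S) (s : S) (n : ℕ) :
    μ s (avoidUntil B n) =
      ∑ x : Fin (n + 1) → S, if ∀ i, x i ∉ B then prefixWeight P s x else 0 := by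
  have hset : avoidUntil B n =
      pathPrefix n ⁻¹' ↑(Finset.univ.filter fun x : Fin (n + 1) → S => ∀ i, x i ∉ B) := by
    ext ω
    simp [avoidUntil, pathPrefix, Fin.forall_iff]
  rw [hset, ← sum_measure_preimage_singleton _
    (fun x _ => measurable_pathPrefix n (measurableSet_singleton x)), Finset.sum_filter]
  simp only [measure_pathPrefix_preimage hμ]

lemma measure_avoidUntil_zero (hμ : IsPathMeasure P μ) (B : Set S) (s : S) :
    μ s (avoidUntil B 0) = if s ∈ B then 0 else 1 := by
  rw [measure_avoidUntil_eq_sum hμ, ← (Equiv.funUnique (Fin 1) S).symm.sum_comp]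
  simp only [prefixWeight]
  rw [Finset.sum_eq_single s] <;> simp_all

lemma measure_avoidUntil_succ (hμ : IsPathMeasure P μ) (B : Set S) (s : S) (n : ℕ) :
    μ s (avoidUntil B (n + 1)) =
      (if s ∈ B then 0 else 1) * ∑ a, P s a * μ a (avoidUntil B n) := by
  rw [measure_avoidUntil_eq_sum hμ, sum_fun_fin_succ_eq_sum_cons]
  simp only [sum_cons_avoid_prefixWeight, ← Finset.mul_sum]
  congr 1
  simp only [measure_avoidUntil_eq_sum hμ, Finset.mul_sum, mul_ite, mul_zero]
  rw [Finset.sum_comm]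
  simp only [Finset.sum_ite_irrel, Finset.sum_const_zero]

lemma measure_avoidUntil_of_mem (hμ : IsPathMeasure P μ) {B : Set S} {s : S} (hs : s ∈ B)
    (n : ℕ) : μ s (avoidUntil B n) = 0 :=
  measure_mono_null (antitone_avoidUntil B (Nat.zero_le n))
    (by rw [measure_avoidUntil_zero hμ, if_pos hs])

lemma measure_avoidUntil_add_le (hμ : IsPathMeasure P μ) {B : Set S} {n : ℕ} {c : ℝ≥0∞}
    (hc : ∀ a, μ a (avoidUntil B n) ≤ c) (m : ℕ) (s : S) :
    μ s (avoidUntil B (m + n)) ≤ c * μ s (avoidUntil B m) := by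
  induction m generalizing s with
  | zero =>
    rw [Nat.zero_add, measure_avoidUntil_zero hμ]
    split_ifs with hs
    · rw [measure_avoidUntil_of_mem hμ hs, mul_zero]
    · rw [mul_one]
      exact hc s
  | succ m ih =>
    rw [Nat.add_right_comm, measure_avoidUntil_succ hμ, measure_avoidUntil_succ hμ]
    calc (if s ∈ B then 0 else 1) * ∑ a, P s a * μ a (avoidUntil B (m + n))
        ≤ (if s ∈ B then 0 else 1) * ∑ a, P s a * (c * μ a (avoidUntil B m)) := by
          gcongr with a
          exact ih a
      _ = c * ((if s ∈ B then 0 else 1) * ∑ a, P s a * μ a (avoidUntil B m)) := by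
          simp only [Finset.mul_sum, mul_left_comm c]

lemma measure_avoidUntil_mul_le_pow (hμ : IsPathMeasure P μ) {B : Set S} {N : ℕ} {c : ℝ≥0∞}
    (hc : ∀ a, μ a (avoidUntil B N) ≤ c) (s : S) (k : ℕ) :
    μ s (avoidUntil B (k * N)) ≤ c ^ k := by
  induction k with
  | zero =>
    have := hμ.1 s
    simpa using prob_le_one
  | succ k ih =>
    calc μ s (avoidUntil B ((k + 1) * N))
        ≤ c * μ s (avoidUntil B (k * N)) := by
          rw [Nat.succ_mul]
          exact measure_avoidUntil_add_le hμ hc (k * N) s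
      _ ≤ c * c ^ k := by gcongr
      _ = c ^ (k + 1) := (pow_succ' c k).symm

lemma measure_setOf_forall_notMem_eq_zero (hμ : IsPathMeasure P μ) {B : Set S} {N : ℕ}
    (hN : ∀ a, μ a (avoidUntil B N) < 1) (s : S) : μ s {ω | ∀ t, ω t ∉ B} = 0 := by
  set c := Finset.univ.sup fun a => μ a (avoidUntil B N)
  have hc : c < 1 := (Finset.sup_lt_iff zero_lt_one).2 fun a _ => hN a
  have hbound (k : ℕ) : μ s {ω | ∀ t, ω t ∉ B} ≤ c ^ k :=
    (measure_mono (setOf_forall_notMem_subset_avoidUntil B _)).trans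
      (measure_avoidUntil_mul_le_pow hμ (N := N)
        (fun a => Finset.le_sup (f := fun a => μ a (avoidUntil B N)) (Finset.mem_univ a)) s k)
  exact nonpos_iff_eq_zero.1
    (ge_of_tendsto' (ENNReal.tendsto_pow_atTop_nhds_zero_of_lt_one hc) hbound)

end PathMeasure

end MarkovChain

open MarkovChain in
theorem ae_eventually_reach_acc_or_safe_states_general
    [Fintype S] [MeasurableSpace S] [MeasurableSingletonClass S]
    (P : S → PMF S) (Acc : Set S) (μ : S → Measure (ℕ → S))
    (hμ : IsPathMeasure P μ) :
    ∀ s : S,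
      μ s {ω | ∀ t, ω t ∉ Acc ∪ {s' | μ s' {ω | ∀ t, ω t ∉ Acc} = 1}} = 0 := by
  set U : Set S := {s' | μ s' {ω | ∀ t, ω t ∉ Acc} = 1}
  have hev (a : S) : ∀ᶠ n in atTop, μ a (avoidUntil (Acc ∪ U) n) < 1 := by
    by_cases ha : a ∈ Acc ∪ U
    · exact .of_forall fun n => (measure_avoidUntil_of_mem hμ ha n).trans_lt zero_lt_one
    · have := hμ.1 a
      have hsafe : μ a {ω | ∀ t, ω t ∉ Acc} < 1 := prob_le_one.lt_of_ne fun h => ha (Or.inr h)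
      filter_upwards [(tendsto_measure_avoidUntil (μ a)
        Acc.toFinite.measurableSet).eventually_lt_const hsafe] with n hn
      exact (measure_mono (avoidUntil_subset_avoidUntil subset_union_left n)).trans_lt hn
  obtain ⟨N, hN⟩ := (eventually_all.2 hev).exists
  exact measure_setOf_forall_notMem_eq_zero hμ hN

/-- for an absorbing `Acc`, almost every path eventually enters `Acc` or
the set `U` of states from which the chain is almost surely safe. -/
theorem ae_eventually_reach_acc_or_safe_states
    [Fintype S] [Nonempty S] [MeasurableSpace S] [MeasurableSingletonClass S]
    (P : S → PMF S) (Acc : Set S) (μ : S → Measure (ℕ → S))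
    (hμ : IsPathMeasure P μ)
    (habs : ∀ s ∈ Acc, (P s).support ⊆ Acc) :
    ∀ s : S,
      μ s {ω | ∀ t, ω t ∉ Acc ∪ {s' | μ s' {ω | ∀ t, ω t ∉ Acc} = 1}} = 0 :=
  ae_eventually_reach_acc_or_safe_states_general P Acc μ hμ
end
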